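/- arXiv:1505.00610 — 9 statements merged into one kernel-verified Lean document; each statement's English description precedes it below -/
import Mathlib

section
/- Under these assumptions, the functions P_0,…,P_{n−1} and Q_0,…,Q_{n−1} form a biorthogonal system on (0,∞): for all 0 ≤ j, k ≤ n−1 the integral ∫₀^∞ P_j(x) Q_k(x) dx converges absolutely and equals δ_{j,k} (1 if j = k and 0 otherwise). -/
/-!
The Mellin convolution `Q = φ ⋆ q`, `Q y = ∫ φ t q (y / t) dt / t`, multiplies moments:
`∫ x ^ i Q x dx = (∫ t ^ i φ t dt) (∫ u ^ i q u du)`, by Fubini and the substitution `x = t u`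
(absolute integrability of the double integral follows from the same computation with norms).
The factor `b_i` in `P_j` is exactly the inverse of the `i`-th moment of `φ`, so integrating
`P_j Q_k` term by term gives `∑ a_{ij} ∫ u ^ i q_k u du = ∫ p_j q_k`.
-/

open MeasureTheory Set

noncomputable def mellinConv (φ q : ℝ → ℝ) (y : ℝ) : ℝ :=
  ∫ t in Ioi (0:ℝ), φ t * q (y / t) / t

lemma integrableOn_comp_div_Ioi_zero {E : Type*} [NormedAddCommGroup E] {h : ℝ → E}
    (hh : IntegrableOn h (Ioi 0)) {t : ℝ} (ht : 0 < t) :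
    IntegrableOn (fun x => h (x / t)) (Ioi 0) := by
  simpa [div_eq_mul_inv] using
    (integrableOn_Ioi_comp_mul_right_iff h 0 (inv_pos.mpr ht)).mpr (by simpa using hh)

lemma integral_comp_div_Ioi_zero {E : Type*} [NormedAddCommGroup E] [NormedSpace ℝ E]
    (h : ℝ → E) {t : ℝ} (ht : 0 < t) :
    ∫ x in Ioi (0:ℝ), h (x / t) = t • ∫ u in Ioi (0:ℝ), h u := by
  simpa [div_eq_mul_inv] using integral_comp_mul_right_Ioi h 0 (inv_pos.mpr ht)

lemma integrableOn_pow_mul_of_integrableOn_pow_mul_abs {g : ℝ → ℝ} {i : ℕ}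
    (hg : AEStronglyMeasurable g (volume.restrict (Ioi 0)))
    (hgi : IntegrableOn (fun x => x ^ i * |g x|) (Ioi 0)) :
    IntegrableOn (fun x => x ^ i * g x) (Ioi 0) := by
  refine hgi.mono' ((continuous_pow i).aestronglyMeasurable.mul hg) ?_
  filter_upwards [ae_restrict_mem measurableSet_Ioi] with x (hx : 0 < x)
  simp [abs_of_pos hx]

lemma pow_mul_mellinConv_integrand (φ q : ℝ → ℝ) (i : ℕ) {t : ℝ} (ht : t ≠ 0) (x : ℝ) :
    x ^ i * (φ t * q (x / t) / t) = t ^ i * φ t / t * ((x / t) ^ i * q (x / t)) := by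
  field_simp
  rw [div_pow]
  field_simp

section MellinMoments

variable {φ q : ℝ → ℝ} {i : ℕ}

lemma integrable_pow_mul_mellinConv_integrand (hφ : Measurable φ) (hq : Measurable q)
    (hφi : IntegrableOn (fun t => t ^ i * φ t) (Ioi 0))
    (hqi : IntegrableOn (fun u => u ^ i * q u) (Ioi 0)) :
    Integrable (Function.uncurry fun x t => x ^ i * (φ t * q (x / t) / t))
      ((volume.restrict (Ioi 0)).prod (volume.restrict (Ioi 0))) := by
  have hmeas : Measurable (Function.uncurry fun x t => x ^ i * (φ t * q (x / t) / t)) := by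
    unfold Function.uncurry; fun_prop
  refine (integrable_prod_iff' hmeas.aestronglyMeasurable).mpr ⟨?_, ?_⟩
  · filter_upwards [ae_restrict_mem measurableSet_Ioi] with t (ht : 0 < t)
    simp only [Function.uncurry_apply_pair, pow_mul_mellinConv_integrand φ q i ht.ne']
    exact (integrableOn_comp_div_Ioi_zero hqi ht).const_mul _
  · refine (hφi.norm.mul_const (∫ u in Ioi (0:ℝ), ‖u ^ i * q u‖)).congr ?_
    filter_upwards [ae_restrict_mem measurableSet_Ioi] with t (ht : 0 < t)
    have hnorm : ∀ x, ‖x ^ i * (φ t * q (x / t) / t)‖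
        = ‖t ^ i * φ t‖ / t * ‖(x / t) ^ i * q (x / t)‖ := fun x => by
      rw [pow_mul_mellinConv_integrand φ q i ht.ne', norm_mul, norm_div, Real.norm_of_nonneg ht.le]
    simp only [Function.uncurry_apply_pair, hnorm, integral_const_mul,
      integral_comp_div_Ioi_zero (fun u => ‖u ^ i * q u‖) ht, smul_eq_mul]
    field_simp

lemma integrableOn_pow_mul_mellinConv (hφ : Measurable φ) (hq : Measurable q)
    (hφi : IntegrableOn (fun t => t ^ i * φ t) (Ioi 0))
    (hqi : IntegrableOn (fun u => u ^ i * q u) (Ioi 0)) :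
    IntegrableOn (fun x => x ^ i * mellinConv φ q x) (Ioi 0) := by
  simp only [mellinConv, ← integral_const_mul]
  exact (integrable_pow_mul_mellinConv_integrand hφ hq hφi hqi).integral_prod_left

lemma integral_pow_mul_mellinConv (hφ : Measurable φ) (hq : Measurable q)
    (hφi : IntegrableOn (fun t => t ^ i * φ t) (Ioi 0))
    (hqi : IntegrableOn (fun u => u ^ i * q u) (Ioi 0)) :
    ∫ x in Ioi (0:ℝ), x ^ i * mellinConv φ q x
      = (∫ t in Ioi (0:ℝ), t ^ i * φ t) * ∫ u in Ioi (0:ℝ), u ^ i * q u := by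
  have hinner : ∀ t ∈ Ioi (0:ℝ), ∫ x in Ioi (0:ℝ), x ^ i * (φ t * q (x / t) / t)
      = t ^ i * φ t * ∫ u in Ioi (0:ℝ), u ^ i * q u := fun t (ht : 0 < t) => by
    simp only [pow_mul_mellinConv_integrand φ q i ht.ne', integral_const_mul,
      integral_comp_div_Ioi_zero (fun u => u ^ i * q u) ht, smul_eq_mul]
    field_simp
  calc ∫ x in Ioi (0:ℝ), x ^ i * mellinConv φ q x
      = ∫ x in Ioi (0:ℝ), ∫ t in Ioi (0:ℝ), x ^ i * (φ t * q (x / t) / t) := by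
        simp only [mellinConv, ← integral_const_mul]
    _ = ∫ t in Ioi (0:ℝ), ∫ x in Ioi (0:ℝ), x ^ i * (φ t * q (x / t) / t) :=
        integral_integral_swap (integrable_pow_mul_mellinConv_integrand hφ hq hφi hqi)
    _ = ∫ t in Ioi (0:ℝ), t ^ i * φ t * ∫ u in Ioi (0:ℝ), u ^ i * q u :=
        setIntegral_congr_fun measurableSet_Ioi hinner
    _ = _ := integral_mul_const _ _

end MellinMoments

lemma integrable_sum_pow_mul {μ : Measure ℝ} {s : Finset ℕ} (c : ℕ → ℝ) {F : ℝ → ℝ}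
    (hF : ∀ i ∈ s, Integrable (fun x => x ^ i * F x) μ) :
    Integrable (fun x => (∑ i ∈ s, c i * x ^ i) * F x) μ := by
  simpa only [Finset.sum_mul, mul_assoc] using
    integrable_finsetSum s fun i hi => (hF i hi).const_mul (c i)

lemma integral_sum_pow_mul {μ : Measure ℝ} {s : Finset ℕ} (c : ℕ → ℝ) {F : ℝ → ℝ}
    (hF : ∀ i ∈ s, Integrable (fun x => x ^ i * F x) μ) :
    ∫ x, (∑ i ∈ s, c i * x ^ i) * F x ∂μ = ∑ i ∈ s, c i * ∫ x, x ^ i * F x ∂μ := by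
  simp only [Finset.sum_mul, mul_assoc, ← integral_const_mul]
  exact integral_finsetSum s fun i hi => (hF i hi).const_mul (c i)

theorem stmt0_general
    (n : ℕ)
    (φ : ℝ → ℝ) (hφmeas : Measurable φ)
    (hφmom : ∀ j < n, IntegrableOn (fun t => t ^ j * φ t) (Ioi 0))
    (hφpos : ∀ j < n, 0 < ∫ t in Ioi (0:ℝ), t ^ j * φ t)
    (b : ℕ → ℝ) (hb : ∀ j < n, b j = (∫ t in Ioi (0:ℝ), t ^ j * φ t)⁻¹)
    (a : ℕ → ℕ → ℝ)
    (p : ℕ → ℝ → ℝ)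
    (hp : ∀ k < n, ∀ x : ℝ, p k x = ∑ j ∈ Finset.range (k + 1), a j k * x ^ j)
    (q : ℕ → ℝ → ℝ) (hqmeas : ∀ k < n, Measurable (q k))
    (hqint : ∀ k < n, ∀ j < n, IntegrableOn (fun x => x ^ j * |q k x|) (Ioi 0))
    (hbiorth : ∀ j < n, ∀ k < n,
      ∫ x in Ioi (0:ℝ), p j x * q k x = if j = k then 1 else 0)
    (P : ℕ → ℝ → ℝ)
    (hP : ∀ k < n, ∀ x : ℝ, P k x = ∑ j ∈ Finset.range (k + 1), a j k * b j * x ^ j)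
    (Q : ℕ → ℝ → ℝ)
    (hQ : ∀ k < n, ∀ y ∈ Ioi (0:ℝ), Q k y = ∫ t in Ioi (0:ℝ), φ t * q k (y / t) / t) :
    ∀ j < n, ∀ k < n,
      IntegrableOn (fun x => P j x * Q k x) (Ioi 0) ∧
      ∫ x in Ioi (0:ℝ), P j x * Q k x = if j = k then 1 else 0 := by
  intro j hj k hk
  have hlt : ∀ i ∈ Finset.range (j + 1), i < n := fun i hi =>
    (Nat.lt_succ_iff.mp (Finset.mem_range.mp hi)).trans_lt hj
  have hq_mom : ∀ i < n, IntegrableOn (fun u => u ^ i * q k u) (Ioi 0) := fun i hi =>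
    integrableOn_pow_mul_of_integrableOn_pow_mul_abs (hqmeas k hk).aestronglyMeasurable
      (hqint k hk i hi)
  have hQ_eq : ∀ i, EqOn (fun x => x ^ i * Q k x) (fun x => x ^ i * mellinConv φ (q k) x)
      (Ioi 0) := fun i x hx => by simp only [hQ k hk x hx, mellinConv]
  have hQ_int : ∀ i < n, IntegrableOn (fun x => x ^ i * Q k x) (Ioi 0) := fun i hi =>
    (integrableOn_pow_mul_mellinConv hφmeas (hqmeas k hk) (hφmom i hi) (hq_mom i hi)).congr_fun
      (hQ_eq i).symm measurableSet_Ioi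
  have hQ_mom : ∀ i < n, ∫ x in Ioi (0:ℝ), x ^ i * Q k x
      = (∫ t in Ioi (0:ℝ), t ^ i * φ t) * ∫ u in Ioi (0:ℝ), u ^ i * q k u := fun i hi => by
    rw [setIntegral_congr_fun measurableSet_Ioi (hQ_eq i),
      integral_pow_mul_mellinConv hφmeas (hqmeas k hk) (hφmom i hi) (hq_mom i hi)]
  simp only [hP j hj]
  refine ⟨integrable_sum_pow_mul _ fun i hi => hQ_int i (hlt i hi), ?_⟩
  rw [integral_sum_pow_mul _ fun i hi => hQ_int i (hlt i hi), ← hbiorth j hj k hk]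
  simp only [hp j hj]
  rw [integral_sum_pow_mul _ fun i hi => hq_mom i (hlt i hi)]
  refine Finset.sum_congr rfl fun i hi => ?_
  rw [hQ_mom i (hlt i hi), hb i (hlt i hi)]
  field_simp [(hφpos i (hlt i hi)).ne']

/-- Biorthogonality of the transformed system `(P_k, Q_k)` obtained from a
biorthogonal system `(p_k, q_k)` on `(0,∞)` by the Mellin-convolution
transformation with a nonnegative weight `φ` with finite nonzero moments. -/
theorem stmt0
    (n : ℕ) (hn : 1 ≤ n)
    (φ : ℝ → ℝ) (hφmeas : Measurable φ) (hφnonneg : ∀ t ∈ Ioi (0:ℝ), 0 ≤ φ t)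
    (hφmom : ∀ j < n, IntegrableOn (fun t => t ^ j * φ t) (Ioi 0))
    (hφpos : ∀ j < n, 0 < ∫ t in Ioi (0:ℝ), t ^ j * φ t)
    (b : ℕ → ℝ) (hb : ∀ j < n, b j = (∫ t in Ioi (0:ℝ), t ^ j * φ t)⁻¹)
    (a : ℕ → ℕ → ℝ) (ha : ∀ k < n, a k k ≠ 0)
    (p : ℕ → ℝ → ℝ)
    (hp : ∀ k < n, ∀ x : ℝ, p k x = ∑ j ∈ Finset.range (k + 1), a j k * x ^ j)
    (q : ℕ → ℝ → ℝ) (hqmeas : ∀ k < n, Measurable (q k))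
    (hqint : ∀ k < n, ∀ j < n, IntegrableOn (fun x => x ^ j * |q k x|) (Ioi 0))
    (hbiorth : ∀ j < n, ∀ k < n,
      ∫ x in Ioi (0:ℝ), p j x * q k x = if j = k then 1 else 0)
    (P : ℕ → ℝ → ℝ)
    (hP : ∀ k < n, ∀ x : ℝ, P k x = ∑ j ∈ Finset.range (k + 1), a j k * b j * x ^ j)
    (Q : ℕ → ℝ → ℝ)
    (hQ : ∀ k < n, ∀ y ∈ Ioi (0:ℝ), Q k y = ∫ t in Ioi (0:ℝ), φ t * q k (y / t) / t) :
    ∀ j < n, ∀ k < n,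
      IntegrableOn (fun x => P j x * Q k x) (Ioi 0) ∧
      ∫ x in Ioi (0:ℝ), P j x * Q k x = if j = k then 1 else 0 :=
  stmt0_general n φ hφmeas hφmom hφpos b hb a p hp q hqmeas hqint hbiorth P hP Q hQ
end

section
/- Define k_n(s,t) = Σ_{k=0}^{n−1} p_k(s) q_k(t) for s ∈ ℂ, t ∈ ℝ, and K_n(x,y) = Σ_{k=0}^{n−1} P_k(x) Q_k(y). Then for all x, y ∈ ℝ, K_n(x,y) = (1/2π) ∫_ℝ ∫_ℝ k_n(iu, t) e^{((x−iu)² − (y−t)²)/2} dt du; this is the double integral (1/2πi) ∫_{−i∞}^{+i∞} ds ∫_ℝ dt k_n(s,t) e^{((x−s)²−(y−t)²)/2} with s parametrized along the imaginary axis s = iu. -/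
/-!
The kernel `k_n(iu, t) e^{((x-iu)² - (y-t)²)/2}` is a finite sum of products `f_k(u) g_k(t)`
with `f_k(u) = p_k(iu) e^{(x-iu)²/2}` and `g_k(t) = q_k(t) e^{-(y-t)²/2}`. Since
`|e^{(x-iu)²/2}| = e^{x²/2} e^{-u²/2}`, each `f_k` is dominated by a polynomial times a Gaussian,
and each `g_k` is `q_k` times a function bounded by `1`, so both are
integrable and the double integral splits as `Σ_k (∫ f_k)(∫ g_k) = 2π Σ_k P_k(x) Q_k(y)`.
-/

open MeasureTheory

lemma integral_integral_sum_mul {α β 𝕜 ι : Type*} [MeasurableSpace α] [MeasurableSpace β]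
    [RCLike 𝕜] {μ : Measure α} {ν : Measure β} (s : Finset ι) {f : ι → α → 𝕜} {g : ι → β → 𝕜}
    (hf : ∀ k ∈ s, Integrable (f k) μ) (hg : ∀ k ∈ s, Integrable (g k) ν) :
    ∫ u, ∫ t, ∑ k ∈ s, f k u * g k t ∂ν ∂μ = ∑ k ∈ s, (∫ u, f k u ∂μ) * ∫ t, g k t ∂ν := by
  have hinner : ∀ u, ∫ t, ∑ k ∈ s, f k u * g k t ∂ν = ∑ k ∈ s, f k u * ∫ t, g k t ∂ν := fun u => by
    rw [integral_finsetSum s fun k hk => (hg k hk).const_mul _]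
    simp only [integral_const_mul]
  simp only [hinner]
  rw [integral_finsetSum s fun k hk => (hf k hk).mul_const _]
  simp only [integral_mul_const]

lemma Complex.norm_exp_sub_I_mul_sq_div_two (x u : ℝ) :
    ‖Complex.exp (((x : ℂ) - Complex.I * u) ^ 2 / 2)‖ = Real.exp ((x ^ 2 - u ^ 2) / 2) := by
  rw [Complex.norm_exp]
  congr 1
  simp [sq]

lemma integrable_I_mul_pow_mul_exp_sub_I_mul_sq (x : ℝ) (j : ℕ) :
    Integrable fun u : ℝ =>
      (Complex.I * u) ^ j * Complex.exp (((x : ℂ) - Complex.I * u) ^ 2 / 2) := by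
  have hgauss : Integrable fun u : ℝ => u ^ j * Real.exp (-(1 / 2) * u ^ 2) := by
    simpa only [Real.rpow_natCast] using
      integrable_rpow_mul_exp_neg_mul_sq (b := 1 / 2) (s := j) (by norm_num)
        (neg_one_lt_zero.trans_le j.cast_nonneg)
  refine (hgauss.norm.const_mul (Real.exp (x ^ 2 / 2))).mono' (by fun_prop)
    (ae_of_all _ fun u => le_of_eq ?_)
  rw [norm_mul, norm_pow, Complex.norm_exp_sub_I_mul_sq_div_two, norm_mul, Complex.norm_I,
    Complex.norm_real, one_mul, norm_mul, norm_pow, Real.norm_of_nonneg (Real.exp_pos _).le,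
    ← mul_assoc, mul_comm (Real.exp _), mul_assoc, ← Real.exp_add]
  ring_nf

lemma integrable_sum_mul_exp_sub_I_mul_sq (x : ℝ) (c : ℕ → ℂ) (m : ℕ) :
    Integrable fun u : ℝ => (∑ j ∈ Finset.range m, c j * (Complex.I * u) ^ j) *
      Complex.exp (((x : ℂ) - Complex.I * u) ^ 2 / 2) := by
  simp only [Finset.sum_mul, mul_assoc]
  exact integrable_finsetSum _ fun j _ =>
    (integrable_I_mul_pow_mul_exp_sub_I_mul_sq x j).const_mul _

lemma MeasureTheory.Integrable.of_one_add_abs_pow_mul {f : ℝ → ℝ} {m : ℕ}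
    (h : Integrable fun t => (1 + |t|) ^ m * |f t|) (hf : AEStronglyMeasurable f) :
    Integrable f :=
  h.mono' hf (ae_of_all _ fun t => by
    rw [Real.norm_eq_abs]
    exact le_mul_of_one_le_left (abs_nonneg _) (one_le_pow₀ (by linarith [abs_nonneg t])))

lemma MeasureTheory.Integrable.mul_exp_neg_sub_sq_div_two {f : ℝ → ℝ} (hf : Integrable f)
    (y : ℝ) :
    Integrable fun t => f t * Real.exp (-(y - t) ^ 2 / 2) :=
  hf.mul_bdd (by fun_prop) (ae_of_all _ fun t => by
    rw [Real.norm_of_nonneg (Real.exp_pos _).le, Real.exp_le_one_iff]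
    nlinarith [sq_nonneg (y - t)])

lemma Complex.exp_sq_sub_sq_div_two_eq_mul (x y t : ℝ) (s : ℂ) :
    Complex.exp ((((x : ℂ) - s) ^ 2 - ((y : ℂ) - t) ^ 2) / 2)
      = Complex.exp (((x : ℂ) - s) ^ 2 / 2) * (Real.exp (-(y - t) ^ 2 / 2) : ℂ) := by
  rw [Complex.ofReal_exp, ← Complex.exp_add]
  push_cast
  ring_nf

theorem stmt4_general
    (n : ℕ)
    (a : ℕ → ℕ → ℝ)
    (q : ℕ → ℝ → ℝ) (hqmeas : ∀ k < n, Measurable (q k))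
    (hqint : ∀ k < n, Integrable (fun t : ℝ => (1 + |t|) ^ (n - 1) * |q k t|))
    (Q : ℕ → ℝ → ℝ)
    (hQ : ∀ k < n, ∀ y : ℝ, Q k y = (Real.sqrt (2 * Real.pi))⁻¹ *
      ∫ t : ℝ, q k t * Real.exp (-(y - t) ^ 2 / 2))
    (P : ℕ → ℝ → ℂ)
    (hP : ∀ k < n, ∀ x : ℝ, P k x = ((Real.sqrt (2 * Real.pi) : ℝ) : ℂ)⁻¹ *
      ∫ u : ℝ, (∑ j ∈ Finset.range (k + 1), (a j k : ℂ) * (Complex.I * u) ^ j) *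
        Complex.exp (((x : ℂ) - Complex.I * u) ^ 2 / 2))
    (kn : ℂ → ℝ → ℂ)
    (hkn : ∀ (s : ℂ) (t : ℝ), kn s t = ∑ k ∈ Finset.range n,
      (∑ j ∈ Finset.range (k + 1), (a j k : ℂ) * s ^ j) * (q k t : ℂ))
    (Kn : ℝ → ℝ → ℂ)
    (hKn : ∀ x y : ℝ, Kn x y = ∑ k ∈ Finset.range n, P k x * (Q k y : ℂ)) :
    ∀ x y : ℝ, Kn x y = ((2 * Real.pi : ℝ) : ℂ)⁻¹ *
      ∫ u : ℝ, ∫ t : ℝ, kn (Complex.I * u) t *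
        Complex.exp ((((x : ℂ) - Complex.I * u) ^ 2 - ((y : ℂ) - t) ^ 2) / 2) := by
  intro x y
  have hq : ∀ k < n, Integrable (q k) := fun k hk =>
    (hqint k hk).of_one_add_abs_pow_mul (hqmeas k hk).aestronglyMeasurable
  have hexpand : ∀ u t : ℝ, kn (Complex.I * u) t *
        Complex.exp ((((x : ℂ) - Complex.I * u) ^ 2 - ((y : ℂ) - t) ^ 2) / 2) =
      ∑ k ∈ Finset.range n, ((∑ j ∈ Finset.range (k + 1), (a j k : ℂ) * (Complex.I * u) ^ j) *
        Complex.exp (((x : ℂ) - Complex.I * u) ^ 2 / 2)) *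
        ((q k t * Real.exp (-(y - t) ^ 2 / 2) : ℝ) : ℂ) := fun u t => by
    rw [hkn, Complex.exp_sq_sub_sq_div_two_eq_mul, Finset.sum_mul]
    refine Finset.sum_congr rfl fun k _ => ?_
    push_cast
    ring
  have hgauss : ∀ k ∈ Finset.range n,
      Integrable fun t : ℝ => ((q k t * Real.exp (-(y - t) ^ 2 / 2) : ℝ) : ℂ) := fun k hk =>
    ((hq k (Finset.mem_range.mp hk)).mul_exp_neg_sub_sq_div_two y).ofReal
  have hsqrt : ((Real.sqrt (2 * Real.pi) : ℝ) : ℂ) ^ 2 = ((2 * Real.pi : ℝ) : ℂ) := by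
    rw [← Complex.ofReal_pow, Real.sq_sqrt (by positivity)]
  simp_rw [hexpand]
  rw [integral_integral_sum_mul _
    (fun k _ => integrable_sum_mul_exp_sub_I_mul_sq x (fun j => (a j k : ℂ)) (k + 1)) hgauss,
    hKn, Finset.mul_sum]
  refine Finset.sum_congr rfl fun k hk => ?_
  rw [hP k (Finset.mem_range.mp hk), hQ k (Finset.mem_range.mp hk), integral_complex_ofReal,
    ← hsqrt]
  push_cast
  ring

/-- Double integral transformation formula for the correlation kernel under
the Weierstrass transform: `K_n(x,y)` equals the double integral of
`k_n(iu,t) e^{((x-iu)² - (y-t)²)/2}` over `u, t ∈ ℝ`, divided by `2π`. -/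
theorem stmt4
    (n : ℕ) (hn : 1 ≤ n)
    (a : ℕ → ℕ → ℝ) (ha : ∀ k < n, a k k ≠ 0)
    (p : ℕ → ℝ → ℝ)
    (hp : ∀ k < n, ∀ t : ℝ, p k t = ∑ j ∈ Finset.range (k + 1), a j k * t ^ j)
    (q : ℕ → ℝ → ℝ) (hqmeas : ∀ k < n, Measurable (q k))
    (hqint : ∀ k < n, Integrable (fun t : ℝ => (1 + |t|) ^ (n - 1) * |q k t|))
    (hbiorth : ∀ j < n, ∀ k < n,
      ∫ t : ℝ, p j t * q k t = if j = k then 1 else 0)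
    (Q : ℕ → ℝ → ℝ)
    (hQ : ∀ k < n, ∀ y : ℝ, Q k y = (Real.sqrt (2 * Real.pi))⁻¹ *
      ∫ t : ℝ, q k t * Real.exp (-(y - t) ^ 2 / 2))
    (P : ℕ → ℝ → ℂ)
    (hP : ∀ k < n, ∀ x : ℝ, P k x = ((Real.sqrt (2 * Real.pi) : ℝ) : ℂ)⁻¹ *
      ∫ u : ℝ, (∑ j ∈ Finset.range (k + 1), (a j k : ℂ) * (Complex.I * u) ^ j) *
        Complex.exp (((x : ℂ) - Complex.I * u) ^ 2 / 2))
    (kn : ℂ → ℝ → ℂ)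
    (hkn : ∀ (s : ℂ) (t : ℝ), kn s t = ∑ k ∈ Finset.range n,
      (∑ j ∈ Finset.range (k + 1), (a j k : ℂ) * s ^ j) * (q k t : ℂ))
    (Kn : ℝ → ℝ → ℂ)
    (hKn : ∀ x y : ℝ, Kn x y = ∑ k ∈ Finset.range n, P k x * (Q k y : ℂ)) :
    ∀ x y : ℝ, Kn x y = ((2 * Real.pi : ℝ) : ℂ)⁻¹ *
      ∫ u : ℝ, ∫ t : ℝ, kn (Complex.I * u) t *
        Complex.exp ((((x : ℂ) - Complex.I * u) ^ 2 - ((y : ℂ) - t) ^ 2) / 2) :=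
  stmt4_general n a q hqmeas hqint Q hQ P hP kn hkn Kn hKn
end

section
/- Then the function P_n(x) = (1/√(2π)) ∫_ℝ p_n(iu) e^{(x−iu)²/2} du (the inverse Weierstrass transform of p_n) is a monic polynomial of degree n with real coefficients, and ∫_ℝ P_n(x) Q_k(x) dx = 0 for every k = 0,…,n−1. -/
/-!
With `He_m` the probabilists' Hermite polynomial, integrating by parts against
`exp ((x - iu)^2 / 2)` shows that `(1/√(2π)) ∫ (iu)^m exp ((x - iu)^2 / 2) du` satisfies the
Hermite recurrence, so it equals `He_m(x)`; hence `P_n = ∑ c_m He_m` where `p_n = ∑ c_m X^m`,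
a monic polynomial of degree `n`. Integrating by parts against `exp (-(x - t)^2 / 2)` shows in
turn that the Weierstrass transform of `He_m` is `t^m`, so the Weierstrass transform of `P_n`
is `p_n`. Fubini, justified by the polynomial moment bound on `q_k`, then moves the
Weierstrass transform from `q_k` onto `P_n`: `∫ P_n Q_k = ∫ p_n q_k = 0`.
-/

open MeasureTheory Polynomial Complex Finset
open scoped Real

lemma integrable_one_add_abs_pow_mul_exp_neg_mul_sq {b : ℝ} (hb : 0 < b) (k : ℕ) :
    Integrable fun x : ℝ => (1 + |x|) ^ k * rexp (-b * x ^ 2) := by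
  have hmoment (j : ℕ) : Integrable fun x : ℝ => |x| ^ j * rexp (-b * x ^ 2) := by
    refine (integrable_rpow_mul_exp_neg_mul_sq hb (s := j)
      (neg_one_lt_zero.trans_le j.cast_nonneg)).norm.congr (ae_of_all _ fun x => ?_)
    simp [Real.rpow_natCast]
  simp_rw [add_pow, sum_mul]
  exact integrable_finsetSum _ fun j _ => ((hmoment (k - j)).const_mul (k.choose j)).congr
    (ae_of_all _ fun x => by simp only [one_pow, one_mul]; ring)

lemma Polynomial.norm_aeval_le {𝕜 A : Type*} [NormedField 𝕜] [NormedRing A] [NormedAlgebra 𝕜 A]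
    [NormOneClass A] (p : 𝕜[X]) {d : ℕ} (hd : p.natDegree ≤ d) (z : A) :
    ‖aeval z p‖ ≤ (∑ i ∈ range (p.natDegree + 1), ‖p.coeff i‖) * (1 + ‖z‖) ^ d := by
  rw [aeval_eq_sum_range, sum_mul]
  refine (norm_sum_le _ _).trans (sum_le_sum fun i hi => ?_)
  rw [norm_smul]
  gcongr
  calc ‖z ^ i‖ ≤ ‖z‖ ^ i := norm_pow_le _ _
    _ ≤ (1 + ‖z‖) ^ i := by gcongr; linarith
    _ ≤ (1 + ‖z‖) ^ d := pow_le_pow_right₀ (by linarith [norm_nonneg z])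
          ((Nat.lt_succ_iff.mp (mem_range.mp hi)).trans hd)

lemma one_add_norm_add_le {E : Type*} [SeminormedAddCommGroup E] (a b : E) :
    1 + ‖a + b‖ ≤ (1 + ‖a‖) * (1 + ‖b‖) := by
  nlinarith [norm_add_le a b, norm_nonneg a, norm_nonneg b]

lemma norm_cexp_sub_I_mul_sq_div_two (x u : ℝ) :
    ‖cexp ((x - I * u) ^ 2 / 2)‖ = rexp (x ^ 2 / 2) * rexp (-(1 / 2) * u ^ 2) := by
  rw [norm_exp, ← Real.exp_add]
  congr 1
  simp [sq]
  ring

lemma integrable_aeval_I_mul_mul_cexp (p : ℝ[X]) (x : ℝ) :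
    Integrable fun u : ℝ => aeval (I * u) p * cexp ((x - I * u) ^ 2 / 2) := by
  refine ((integrable_one_add_abs_pow_mul_exp_neg_mul_sq (b := 1 / 2) (by norm_num)
    p.natDegree).const_mul ((∑ i ∈ range (p.natDegree + 1), ‖p.coeff i‖) * rexp (x ^ 2 / 2))).mono'
    (by fun_prop) (ae_of_all _ fun u => ?_)
  rw [norm_mul, norm_cexp_sub_I_mul_sq_div_two]
  have hz : ‖I * (u : ℂ)‖ = |u| := by simp
  calc _ ≤ (∑ i ∈ range (p.natDegree + 1), ‖p.coeff i‖) * (1 + |u|) ^ p.natDegree *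
        (rexp (x ^ 2 / 2) * rexp (-(1 / 2) * u ^ 2)) := by
        gcongr
        simpa [hz] using p.norm_aeval_le le_rfl (I * u)
    _ = _ := by ring

lemma abs_eval_le_mul_one_add_abs_sub_pow (p : ℝ[X]) {d : ℕ} (hd : p.natDegree ≤ d) (x t : ℝ) :
    |p.eval x| ≤
      (∑ i ∈ range (p.natDegree + 1), |p.coeff i|) * ((1 + |x - t|) ^ d * (1 + |t|) ^ d) := by
  have h := p.norm_aeval_le hd x
  simp only [coe_aeval_eq_eval, Real.norm_eq_abs] at h
  refine h.trans (mul_le_mul_of_nonneg_left ?_ (sum_nonneg fun i _ => abs_nonneg _))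
  rw [← mul_pow]
  gcongr
  simpa using one_add_norm_add_le (x - t) t

lemma integrable_eval_mul_exp_neg_sub_sq (p : ℝ[X]) (t : ℝ) :
    Integrable fun x : ℝ => p.eval x * rexp (-(x - t) ^ 2 / 2) := by
  refine (((integrable_one_add_abs_pow_mul_exp_neg_mul_sq (b := 1 / 2) (by norm_num)
    p.natDegree).comp_sub_right t).const_mul ((∑ i ∈ range (p.natDegree + 1), |p.coeff i|) *
      (1 + |t|) ^ p.natDegree)).mono' (by fun_prop) (ae_of_all _ fun x => ?_)
  rw [norm_mul, Real.norm_eq_abs, Real.norm_eq_abs, Real.abs_exp]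
  calc _ ≤ (∑ i ∈ range (p.natDegree + 1), |p.coeff i|) *
        ((1 + |x - t|) ^ p.natDegree * (1 + |t|) ^ p.natDegree) * rexp (-(x - t) ^ 2 / 2) := by
        gcongr
        exact abs_eval_le_mul_one_add_abs_sub_pow p le_rfl x t
    _ = _ := by ring_nf

lemma integrable_I_mul_pow_mul_cexp (m : ℕ) (x : ℝ) :
    Integrable fun u : ℝ => (I * u) ^ m * cexp ((x - I * u) ^ 2 / 2) := by
  simpa using integrable_aeval_I_mul_mul_cexp (X ^ m) x

lemma integral_cexp_sub_I_mul_sq_div_two (x : ℝ) :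
    ∫ u : ℝ, cexp ((x - I * u) ^ 2 / 2) = √(2 * π) := by
  have hsq (u : ℝ) : ((x : ℂ) - I * u) ^ 2 / 2 = -(1 / 2) * (u + x * I) ^ 2 := by
    linear_combination ((x : ℂ) ^ 2 + u ^ 2) / 2 * I_sq
  simp_rw [hsq, GaussianFourier.integral_cexp_neg_mul_sq_add_real_mul_I (b := 1 / 2)
    (by norm_num) x]
  rw [show (π : ℂ) / (1 / 2) = ((2 * π : ℝ) : ℂ) by push_cast; ring, Real.sqrt_eq_rpow,
    ofReal_cpow (by positivity)]
  norm_num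

lemma hasDerivAt_cexp_sub_I_mul_sq_div_two (x u : ℝ) :
    HasDerivAt (fun u : ℝ => cexp ((x - I * u) ^ 2 / 2))
      (cexp ((x - I * u) ^ 2 / 2) * ((x - I * u) * -I)) u := by
  have hlin : HasDerivAt (fun z : ℂ => x - I * z) (-I) u := by
    simpa using ((hasDerivAt_id' (u : ℂ)).const_mul I).const_sub (x : ℂ)
  convert ((hlin.fun_pow 2).div_const 2).cexp.comp_ofReal using 1
  ring

/-- For `m = 0` the truncated `m - 1` is harmless: its coefficient `m` vanishes. -/
lemma integral_I_mul_pow_mul_cexp_recurrence (m : ℕ) (x : ℝ) :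
    x * (∫ u : ℝ, (I * u) ^ m * cexp ((x - I * u) ^ 2 / 2))
      - ∫ u : ℝ, (I * u) ^ (m + 1) * cexp ((x - I * u) ^ 2 / 2)
      = m * ∫ u : ℝ, (I * u) ^ (m - 1) * cexp ((x - I * u) ^ 2 / 2) := by
  have hpow (u : ℝ) : HasDerivAt (fun u : ℝ => (I * u) ^ m) (m * (I * u) ^ (m - 1) * I) u := by
    simpa using (((hasDerivAt_id' (u : ℂ)).const_mul I).fun_pow m).comp_ofReal
  have hibp := integral_mul_deriv_eq_deriv_mul_of_integrable
    (fun u _ => hpow u) (fun u _ => hasDerivAt_cexp_sub_I_mul_sq_div_two x u)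
    ((((integrable_I_mul_pow_mul_cexp m x).const_mul x).sub
      (integrable_I_mul_pow_mul_cexp (m + 1) x)).const_mul (-I) |>.congr
        (ae_of_all _ fun u => by simp only [Pi.mul_apply, Pi.sub_apply]; ring))
    (((integrable_I_mul_pow_mul_cexp (m - 1) x).const_mul (m * I)).congr
      (ae_of_all _ fun u => by simp only [Pi.mul_apply]; ring))
    (integrable_I_mul_pow_mul_cexp m x)
  have hlhs : ∫ u : ℝ, (I * u) ^ m * (cexp ((x - I * u) ^ 2 / 2) * ((x - I * u) * -I))
      = -I * (x * (∫ u : ℝ, (I * u) ^ m * cexp ((x - I * u) ^ 2 / 2))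
        - ∫ u : ℝ, (I * u) ^ (m + 1) * cexp ((x - I * u) ^ 2 / 2)) := by
    rw [← integral_const_mul, ← integral_sub ((integrable_I_mul_pow_mul_cexp m x).const_mul x)
      (integrable_I_mul_pow_mul_cexp (m + 1) x), ← integral_const_mul]
    congr with u
    ring
  have hrhs : ∫ u : ℝ, m * (I * u) ^ (m - 1) * I * cexp ((x - I * u) ^ 2 / 2)
      = m * I * ∫ u : ℝ, (I * u) ^ (m - 1) * cexp ((x - I * u) ^ 2 / 2) := by
    rw [← integral_const_mul]
    congr with u
    ring
  rw [hlhs, hrhs] at hibp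
  apply mul_left_cancel₀ (neg_ne_zero.mpr I_ne_zero)
  linear_combination hibp

lemma Polynomial.derivative_hermite_succ (n : ℕ) :
    derivative (hermite (n + 1)) = (n + 1 : ℤ[X]) * hermite n := by
  induction n with
  | zero => simp
  | succ n ih =>
    rw [hermite_succ (n + 1), derivative_sub, derivative_mul, derivative_X, ih, hermite_succ n,
      derivative_mul]
    simp only [derivative_add, derivative_natCast, derivative_one]
    push_cast
    ring

lemma Polynomial.hermite_succ_succ (n : ℕ) :
    hermite (n + 2) = X * hermite (n + 1) - (n + 1 : ℤ[X]) * hermite n := by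
  rw [hermite_succ (n + 1), derivative_hermite_succ]

lemma integral_I_mul_pow_mul_cexp (m : ℕ) (x : ℝ) :
    ∫ u : ℝ, (I * u) ^ m * cexp ((x - I * u) ^ 2 / 2)
      = ((√(2 * π) * aeval x (hermite m) : ℝ) : ℂ) := by
  induction m using Nat.twoStepInduction with
  | zero => simp [integral_cexp_sub_I_mul_sq_div_two]
  | one =>
    have h := integral_I_mul_pow_mul_cexp_recurrence 0 x
    simp only [pow_zero, one_mul, zero_add, CharP.cast_eq_zero, zero_mul, sub_eq_zero] at h
    rw [← h, integral_cexp_sub_I_mul_sq_div_two, hermite_one, aeval_X]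
    push_cast
    ring
  | more m ih ih' =>
    have h := integral_I_mul_pow_mul_cexp_recurrence (m + 1) x
    rw [add_tsub_cancel_right, ih, ih', show m + 1 + 1 = m + 2 from rfl] at h
    rw [hermite_succ_succ]
    simp only [map_sub, map_mul, aeval_X, map_add, map_natCast, map_one]
    push_cast at h ⊢
    linear_combination -h

lemma integral_eval_X_mul_sub_derivative_mul_exp (p : ℝ[X]) (t : ℝ) :
    ∫ x : ℝ, (X * p - derivative p).eval x * rexp (-(x - t) ^ 2 / 2)
      = t * ∫ x : ℝ, p.eval x * rexp (-(x - t) ^ 2 / 2) := by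
  have hexp (x : ℝ) : HasDerivAt (fun x => rexp (-(x - t) ^ 2 / 2))
      (rexp (-(x - t) ^ 2 / 2) * -(x - t)) x := by
    convert ((((hasDerivAt_id' x).sub_const t).fun_pow 2).fun_neg.div_const 2).exp using 1
    ring
  have hibp := integral_mul_deriv_eq_deriv_mul_of_integrable
    (fun x _ => p.hasDerivAt x) (fun x _ => hexp x)
    ((integrable_eval_mul_exp_neg_sub_sq (p * (C t - X)) t).congr
      (ae_of_all _ fun x => by simp only [eval_mul, eval_sub, eval_C, eval_X, Pi.mul_apply]; ring))
    (integrable_eval_mul_exp_neg_sub_sq (derivative p) t)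
    (integrable_eval_mul_exp_neg_sub_sq p t)
  have hsplit : ∫ x : ℝ, p.eval x * (rexp (-(x - t) ^ 2 / 2) * -(x - t))
      = t * (∫ x : ℝ, p.eval x * rexp (-(x - t) ^ 2 / 2))
        - ∫ x : ℝ, (X * p).eval x * rexp (-(x - t) ^ 2 / 2) := by
    rw [← integral_const_mul, ← integral_sub ((integrable_eval_mul_exp_neg_sub_sq p t).const_mul t)
      (integrable_eval_mul_exp_neg_sub_sq (X * p) t)]
    congr with x
    simp only [eval_mul, eval_X]
    ring
  simp only [eval_sub, sub_mul]
  rw [integral_sub (integrable_eval_mul_exp_neg_sub_sq (X * p) t)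
    (integrable_eval_mul_exp_neg_sub_sq (derivative p) t)]
  linarith

lemma integral_exp_neg_sub_sq_div_two (t : ℝ) : ∫ x : ℝ, rexp (-(x - t) ^ 2 / 2) = √(2 * π) := by
  have h := integral_sub_right_eq_self (μ := volume) (fun y : ℝ => rexp (-(1 / 2) * y ^ 2)) t
  rw [integral_gaussian, show π / (1 / 2) = 2 * π by ring] at h
  rw [← h]
  congr with x
  ring_nf

lemma integral_aeval_hermite_mul_exp (m : ℕ) (t : ℝ) :
    ∫ x : ℝ, aeval x (hermite m) * rexp (-(x - t) ^ 2 / 2) = √(2 * π) * t ^ m := by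
  induction m with
  | zero => simp [integral_exp_neg_sub_sq_div_two]
  | succ m ih =>
    have h := integral_eval_X_mul_sub_derivative_mul_exp ((hermite m).map (algebraMap ℤ ℝ)) t
    rw [derivative_map, ← Polynomial.map_X (algebraMap ℤ ℝ), ← Polynomial.map_mul,
      ← Polynomial.map_sub, ← hermite_succ] at h
    simp only [eval_map_algebraMap, ih] at h
    rw [h, pow_succ]
    ring

noncomputable def inverseWeierstrass (p : ℝ[X]) : ℝ[X] :=
  ∑ m ∈ range (p.natDegree + 1), C (p.coeff m) * (hermite m).map (algebraMap ℤ ℝ)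

lemma eval_inverseWeierstrass (p : ℝ[X]) (x : ℝ) :
    (inverseWeierstrass p).eval x
      = ∑ m ∈ range (p.natDegree + 1), p.coeff m * aeval x (hermite m) := by
  simp only [inverseWeierstrass, eval_finsetSum, eval_mul, eval_C, eval_map_algebraMap]

lemma natDegree_inverseWeierstrass_le (p : ℝ[X]) :
    (inverseWeierstrass p).natDegree ≤ p.natDegree := by
  refine natDegree_sum_le_of_forall_le _ _ fun m hm => (natDegree_C_mul_le _ _).trans ?_
  rw [(hermite_monic m).natDegree_map, natDegree_hermite]
  exact Nat.lt_succ_iff.mp (mem_range.mp hm)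

lemma coeff_inverseWeierstrass_natDegree (p : ℝ[X]) :
    (inverseWeierstrass p).coeff p.natDegree = p.leadingCoeff := by
  rw [inverseWeierstrass, finsetSum_coeff, sum_eq_single_of_mem _ (self_mem_range_succ _)]
  · rw [coeff_C_mul, coeff_map, coeff_hermite_self, map_one, mul_one, leadingCoeff]
  · intro m hm hne
    rw [coeff_C_mul, coeff_map, coeff_hermite_of_lt
      (lt_of_le_of_ne (Nat.lt_succ_iff.mp (mem_range.mp hm)) hne), map_zero, mul_zero]

lemma natDegree_inverseWeierstrass (p : ℝ[X]) :
    (inverseWeierstrass p).natDegree = p.natDegree := by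
  rcases eq_or_ne p 0 with rfl | hp
  · simp [inverseWeierstrass]
  refine (natDegree_inverseWeierstrass_le p).antisymm (le_natDegree_of_ne_zero ?_)
  rw [coeff_inverseWeierstrass_natDegree]
  exact leadingCoeff_ne_zero.mpr hp

lemma leadingCoeff_inverseWeierstrass (p : ℝ[X]) :
    (inverseWeierstrass p).leadingCoeff = p.leadingCoeff := by
  rw [leadingCoeff, natDegree_inverseWeierstrass, coeff_inverseWeierstrass_natDegree]

lemma monic_inverseWeierstrass {p : ℝ[X]} (hp : p.Monic) : (inverseWeierstrass p).Monic :=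
  (leadingCoeff_inverseWeierstrass p).trans hp

lemma integral_aeval_I_mul_mul_cexp (p : ℝ[X]) (x : ℝ) :
    ∫ u : ℝ, aeval (I * u) p * cexp ((x - I * u) ^ 2 / 2)
      = ((√(2 * π) * (inverseWeierstrass p).eval x : ℝ) : ℂ) := by
  have hsum (u : ℝ) : aeval (I * u) p * cexp ((x - I * u) ^ 2 / 2)
      = ∑ m ∈ range (p.natDegree + 1),
          (p.coeff m : ℂ) * ((I * u) ^ m * cexp ((x - I * u) ^ 2 / 2)) := by
    rw [aeval_eq_sum_range, sum_mul]
    congr with m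
    rw [real_smul, mul_assoc]
  simp_rw [hsum]
  rw [integral_finsetSum _ fun m _ => (integrable_I_mul_pow_mul_cexp m x).const_mul _]
  simp_rw [integral_const_mul, integral_I_mul_pow_mul_cexp, eval_inverseWeierstrass, mul_sum]
  push_cast
  congr with m
  ring

lemma integral_eval_inverseWeierstrass_mul_exp (p : ℝ[X]) (t : ℝ) :
    ∫ x : ℝ, (inverseWeierstrass p).eval x * rexp (-(x - t) ^ 2 / 2) = √(2 * π) * p.eval t := by
  simp_rw [eval_inverseWeierstrass, sum_mul, mul_assoc]
  rw [integral_finsetSum _ fun m _ => ?_]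
  · simp_rw [integral_const_mul, integral_aeval_hermite_mul_exp, eval_eq_sum_range, mul_sum]
    congr with m
    ring
  · simpa only [eval_map_algebraMap] using
      (integrable_eval_mul_exp_neg_sub_sq ((hermite m).map (algebraMap ℤ ℝ)) t).const_mul
        (p.coeff m)

noncomputable def weierstrassTransform (q : ℝ → ℝ) (y : ℝ) : ℝ :=
  (√(2 * π))⁻¹ * ∫ t : ℝ, q t * rexp (-(y - t) ^ 2 / 2)

lemma integrable_eval_mul_weierstrass_kernel (P : ℝ[X]) {q : ℝ → ℝ} (hq : Measurable q) {d : ℕ}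
    (hd : P.natDegree ≤ d) (hqint : Integrable fun t : ℝ => (1 + |t|) ^ d * |q t|) :
    Integrable (fun z : ℝ × ℝ => P.eval z.1 * (q z.2 * rexp (-(z.1 - z.2) ^ 2 / 2)))
      (volume.prod volume) := by
  have hconv := hqint.convolution_integrand (ContinuousLinearMap.mul ℝ ℝ) (μ := volume)
    (integrable_one_add_abs_pow_mul_exp_neg_mul_sq (b := 1 / 2) (by norm_num) d)
  refine (hconv.const_mul (∑ i ∈ range (P.natDegree + 1), |P.coeff i|)).mono' ?_
    (ae_of_all _ fun z => ?_)
  · exact (P.continuous.comp continuous_fst).aestronglyMeasurable.mul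
      ((hq.comp measurable_snd).aestronglyMeasurable.mul (by fun_prop))
  · simp only [ContinuousLinearMap.mul_apply', norm_mul, Real.norm_eq_abs, Real.abs_exp]
    calc _ ≤ (∑ i ∈ range (P.natDegree + 1), |P.coeff i|) *
          ((1 + |z.1 - z.2|) ^ d * (1 + |z.2|) ^ d) * (|q z.2| * rexp (-(z.1 - z.2) ^ 2 / 2)) := by
          gcongr
          exact abs_eval_le_mul_one_add_abs_sub_pow P hd z.1 z.2
      _ = _ := by ring_nf

lemma integral_eval_mul_weierstrassTransform (P : ℝ[X]) {q : ℝ → ℝ} (hq : Measurable q) {d : ℕ}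
    (hd : P.natDegree ≤ d) (hqint : Integrable fun t : ℝ => (1 + |t|) ^ d * |q t|) :
    Integrable (fun x : ℝ => P.eval x * weierstrassTransform q x) ∧
      ∫ x : ℝ, P.eval x * weierstrassTransform q x
        = (√(2 * π))⁻¹ * ∫ t : ℝ, q t * ∫ x : ℝ, P.eval x * rexp (-(x - t) ^ 2 / 2) := by
  have hK := integrable_eval_mul_weierstrass_kernel P hq hd hqint
  have hrw : (fun x : ℝ => P.eval x * weierstrassTransform q x)
      = fun x => (√(2 * π))⁻¹ * ∫ t : ℝ, P.eval x * (q t * rexp (-(x - t) ^ 2 / 2)) := by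
    ext x
    rw [weierstrassTransform, integral_const_mul]
    ring
  rw [hrw]
  refine ⟨hK.integral_prod_left.const_mul _, ?_⟩
  rw [integral_const_mul, integral_integral_swap hK]
  congr with t
  rw [← integral_const_mul]
  congr with x
  ring

lemma integral_eval_inverseWeierstrass_mul_weierstrassTransform (p : ℝ[X]) {q : ℝ → ℝ}
    (hq : Measurable q) (hqint : Integrable fun t : ℝ => (1 + |t|) ^ p.natDegree * |q t|) :
    Integrable (fun x : ℝ => (inverseWeierstrass p).eval x * weierstrassTransform q x) ∧
      ∫ x : ℝ, (inverseWeierstrass p).eval x * weierstrassTransform q x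
        = ∫ t : ℝ, p.eval t * q t := by
  obtain ⟨hint, heq⟩ := integral_eval_mul_weierstrassTransform (inverseWeierstrass p) hq
    (natDegree_inverseWeierstrass_le p) hqint
  refine ⟨hint, ?_⟩
  simp_rw [heq, integral_eval_inverseWeierstrass_mul_exp, ← integral_const_mul]
  congr with t
  field_simp

theorem stmt5_general
    (n : ℕ)
    (q : ℕ → ℝ → ℝ) (hqmeas : ∀ k < n, Measurable (q k))
    (hqint : ∀ k < n, Integrable (fun t : ℝ => (1 + |t|) ^ n * |q k t|))
    (Q : ℕ → ℝ → ℝ)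
    (hQ : ∀ k < n, ∀ y : ℝ, Q k y = (Real.sqrt (2 * Real.pi))⁻¹ *
      ∫ t : ℝ, q k t * Real.exp (-(y - t) ^ 2 / 2))
    (pn : Polynomial ℝ) (hmonic : pn.Monic) (hdeg : pn.natDegree = n)
    (horth : ∀ k < n, ∫ t : ℝ, pn.eval t * q k t = 0)
    (Pn : ℝ → ℂ)
    (hPn : ∀ x : ℝ, Pn x = ((Real.sqrt (2 * Real.pi) : ℝ) : ℂ)⁻¹ *
      ∫ u : ℝ, (Polynomial.aeval (Complex.I * (u : ℂ))) pn *
        Complex.exp (((x : ℂ) - Complex.I * u) ^ 2 / 2)) :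
    (∃ P : Polynomial ℝ, P.Monic ∧ P.natDegree = n ∧
      ∀ x : ℝ, Pn x = ((P.eval x : ℝ) : ℂ)) ∧
    ∀ k < n,
      Integrable (fun x : ℝ => Pn x * (Q k x : ℂ)) ∧
      ∫ x : ℝ, Pn x * (Q k x : ℂ) = 0 := by
  have hPn_eval (x : ℝ) : Pn x = (inverseWeierstrass pn).eval x := by
    have hsqrt : (√(2 * π) : ℂ) ≠ 0 := ofReal_ne_zero.mpr (by positivity)
    rw [hPn, integral_aeval_I_mul_mul_cexp, ofReal_mul, ← mul_assoc, inv_mul_cancel₀ hsqrt,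
      one_mul]
  refine ⟨⟨inverseWeierstrass pn, monic_inverseWeierstrass hmonic,
    (natDegree_inverseWeierstrass pn).trans hdeg, hPn_eval⟩, fun k hk => ?_⟩
  obtain ⟨hint, heq⟩ := integral_eval_inverseWeierstrass_mul_weierstrassTransform pn
    (hqmeas k hk) (hdeg ▸ hqint k hk)
  have hQk : Q k = weierstrassTransform (q k) := funext (hQ k hk)
  have hprod : (fun x : ℝ => Pn x * (Q k x : ℂ))
      = fun x => (((inverseWeierstrass pn).eval x * weierstrassTransform (q k) x : ℝ) : ℂ) := by
    ext x
    rw [hPn_eval, hQk, ofReal_mul]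
  rw [hprod]
  refine ⟨hint.ofReal, ?_⟩
  rw [integral_complex_ofReal, heq, horth k hk, ofReal_zero]

/-- The inverse Weierstrass transform `P_n` of a monic real polynomial `p_n` of
degree `n` that is orthogonal to `q_0, …, q_{n-1}` is again a monic real
polynomial of degree `n`, and it is orthogonal to the Weierstrass transforms
`Q_0, …, Q_{n-1}`. -/
theorem stmt5
    (n : ℕ) (hn : 1 ≤ n)
    (q : ℕ → ℝ → ℝ) (hqmeas : ∀ k < n, Measurable (q k))
    (hqint : ∀ k < n, Integrable (fun t : ℝ => (1 + |t|) ^ n * |q k t|))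
    (Q : ℕ → ℝ → ℝ)
    (hQ : ∀ k < n, ∀ y : ℝ, Q k y = (Real.sqrt (2 * Real.pi))⁻¹ *
      ∫ t : ℝ, q k t * Real.exp (-(y - t) ^ 2 / 2))
    (pn : Polynomial ℝ) (hmonic : pn.Monic) (hdeg : pn.natDegree = n)
    (horth : ∀ k < n, ∫ t : ℝ, pn.eval t * q k t = 0)
    (Pn : ℝ → ℂ)
    (hPn : ∀ x : ℝ, Pn x = ((Real.sqrt (2 * Real.pi) : ℝ) : ℂ)⁻¹ *
      ∫ u : ℝ, (Polynomial.aeval (Complex.I * (u : ℂ))) pn *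
        Complex.exp (((x : ℂ) - Complex.I * u) ^ 2 / 2)) :
    (∃ P : Polynomial ℝ, P.Monic ∧ P.natDegree = n ∧
      ∀ x : ℝ, Pn x = ((P.eval x : ℝ) : ℂ)) ∧
    ∀ k < n,
      Integrable (fun x : ℝ => Pn x * (Q k x : ℂ)) ∧
      ∫ x : ℝ, Pn x * (Q k x : ℂ) = 0 :=
  stmt5_general n q hqmeas hqint Q hQ pn hmonic hdeg horth Pn hPn
end

section
/- Define k_n(x,y) = Σ_{k=0}^{n−1} p_k(x) q_k(y) (where x may be complex) and K_n(x,y) = Σ_{k=0}^{n−1} P_k(x) Q_k(y). Then for all x, y > 0 and every ρ > 0, K_n(x,y) = (1/2πi) ∮_{|s|=ρ} ( ∫₀^∞ k_n(x/s, y/t) (t/s)^ν e^{s−t} dt/t ) ds/s, where the contour is the counterclockwise circle of radius ρ centered at 0. -/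
/-!
Expanding `k_n`, the integrand in `t` is a finite sum of terms
`a_{j,k} (x/s)^j s^{-ν} e^s · t^ν e^{-t} q_k(y/t)/t`, so the `t`-integral produces
`Q_k(y) a_{j,k} x^j e^s / s^{j+ν}`. By Cauchy's formula for derivatives,
`(2πi)⁻¹ ∮ e^s / s^{j+ν+1} ds = 1/(j+ν)!`, which turns the coefficients of `p_k` into
those of `P_k`.
-/

open MeasureTheory Set

open Complex in
lemma circleIntegral_exp_div_pow_succ {ρ : ℝ} (hρ : 0 < ρ) (m : ℕ) :
    (∮ z in C(0, ρ), exp z / z ^ (m + 1)) = 2 * Real.pi * I / m.factorial := by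
  have h := differentiable_exp.differentiableOn.circleIntegral_one_div_sub_center_pow_smul
    (c := 0) (R := ρ) hρ m
  simp only [iteratedDeriv_eq_iterate, iter_deriv_exp, exp_zero, smul_eq_mul, mul_one,
    sub_zero] at h
  simpa [div_eq_inv_mul] using h

open Complex in
lemma circleIntegral_sum_div_pow_mul_exp {ρ : ℝ} (hρ : 0 < ρ) (m ν : ℕ) (c : ℕ → ℂ) (x : ℂ) :
    (∮ s in C(0, ρ), (∑ j ∈ Finset.range m, c j * (x / s) ^ j) * exp s / s ^ (ν + 1)) =
      2 * Real.pi * I * ∑ j ∈ Finset.range m, c j * x ^ j / (j + ν).factorial := by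
  have hcont : ∀ j, CircleIntegrable (fun s => c j * x ^ j * (exp s / s ^ (j + ν + 1))) 0 ρ :=
    fun j => ContinuousOn.circleIntegrable hρ.le <| by
      fun_prop (disch := intro s hs; simp [ne_zero_of_mem_sphere hρ.ne' ⟨s, hs⟩])
  calc (∮ s in C(0, ρ), (∑ j ∈ Finset.range m, c j * (x / s) ^ j) * exp s / s ^ (ν + 1))
      = ∮ s in C(0, ρ), ∑ j ∈ Finset.range m, c j * x ^ j * (exp s / s ^ (j + ν + 1)) := by
        refine circleIntegral.integral_congr hρ.le fun s hs => ?_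
        simp only [Finset.sum_mul, Finset.sum_div]
        refine Finset.sum_congr rfl fun j _ => ?_
        have := ne_zero_of_mem_sphere hρ.ne' ⟨s, hs⟩
        rw [div_pow]
        field_simp
        ring
    _ = 2 * Real.pi * I * ∑ j ∈ Finset.range m, c j * x ^ j / (j + ν).factorial := by
        rw [circleIntegral.integral_fun_sum fun j _ => hcont j, Finset.mul_sum]
        refine Finset.sum_congr rfl fun j _ => ?_
        rw [circleIntegral.integral_const_mul, circleIntegral_exp_div_pow_succ hρ]
        ring

lemma pow_mul_exp_neg_le_factorial {v : ℝ} (hv : 0 ≤ v) (m : ℕ) :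
    v ^ m * Real.exp (-v) ≤ m.factorial := by
  have h := Real.pow_div_factorial_le_exp v hv m
  rw [div_le_iff₀ (by positivity)] at h
  rw [Real.exp_neg, ← div_eq_mul_inv, div_le_iff₀ (Real.exp_pos v)]
  linarith

lemma image_const_div_Ioi_zero {y : ℝ} (hy : 0 < y) : (fun u => y / u) '' Ioi 0 = Ioi 0 := by
  refine Subset.antisymm (image_subset_iff.2 fun u hu => div_pos hy hu) fun t ht => ?_
  exact ⟨y / t, div_pos hy ht, div_div_cancel₀ hy.ne'⟩

lemma integrableOn_pow_mul_exp_neg_mul_comp_const_div (ν : ℕ) {q : ℝ → ℝ}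
    (hq : IntegrableOn q (Ioi 0)) {y : ℝ} (hy : 0 < y) :
    IntegrableOn (fun t => t ^ ν * Real.exp (-t) * q (y / t) / t) (Ioi 0) := by
  have hderiv : ∀ u ∈ Ioi (0 : ℝ), HasDerivWithinAt (fun u => y / u) (-(y / u ^ 2)) (Ioi 0) u :=
    fun u hu => by simpa [div_eq_mul_inv] using
      ((hasDerivAt_inv (ne_of_gt hu)).const_mul y).hasDerivWithinAt
  have hinj : InjOn (fun u => y / u) (Ioi 0) := fun u₁ _ u₂ _ h => by
    simpa [hy.ne'] using congrArg (y / ·) h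
  rw [← image_const_div_Ioi_zero hy,
    integrableOn_image_iff_integrableOn_abs_deriv_smul measurableSet_Ioi hderiv hinj]
  -- after `t = y / u` the weight becomes `v ^ (ν + 1) e ^ (-v) / y` with `v = y / u`,
  -- which is bounded by `(ν + 1)! / y`
  have hweight : IntegrableOn (fun u => (y / u) ^ (ν + 1) * Real.exp (-(y / u)) / y * q u)
      (Ioi 0) := by
    refine Integrable.bdd_mul (c := (ν + 1).factorial / y) hq (by fun_prop) ?_
    refine (ae_restrict_iff' measurableSet_Ioi).2 (Filter.Eventually.of_forall fun u hu => ?_)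
    have hv : 0 < y / u := div_pos hy hu
    rw [Real.norm_of_nonneg (by positivity)]
    exact div_le_div_of_nonneg_right (pow_mul_exp_neg_le_factorial hv.le _) hy.le
  refine hweight.congr_fun (fun u (hu : 0 < u) => ?_) measurableSet_Ioi
  rw [abs_neg, abs_of_pos (by positivity), smul_eq_mul, div_div_cancel₀ hy.ne']
  simp only [div_pow]
  field_simp
  ring

lemma setIntegral_sum_mul_comp_div_mul_exp {n : ℕ} (ν : ℕ) (c : ℕ → ℂ) {q : ℕ → ℝ → ℝ}
    (hq : ∀ k ∈ Finset.range n, IntegrableOn (q k) (Ioi 0)) {y : ℝ} (hy : 0 < y) (s : ℂ) :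
    ∫ t in Ioi (0 : ℝ), (∑ k ∈ Finset.range n, c k * (q k (y / t) : ℂ)) * ((t : ℂ) / s) ^ ν *
        Complex.exp (s - t) / t =
      ∑ k ∈ Finset.range n, c k * Complex.exp s / s ^ ν *
        ((∫ t in Ioi (0 : ℝ), t ^ ν * Real.exp (-t) * q k (y / t) / t : ℝ) : ℂ) := by
  rw [setIntegral_congr_fun measurableSet_Ioi (g := fun t : ℝ => ∑ k ∈ Finset.range n,
      c k * Complex.exp s / s ^ ν * ((t ^ ν * Real.exp (-t) * q k (y / t) / t : ℝ) : ℂ))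
      fun t _ => ?_, integral_finsetSum _ fun k hk =>
        ((integrableOn_pow_mul_exp_neg_mul_comp_const_div ν (hq k hk) hy).ofReal.const_mul _)]
  · refine Finset.sum_congr rfl fun k _ => ?_
    rw [integral_const_mul, integral_complex_ofReal]
  · simp only [Finset.sum_mul, Finset.sum_div]
    refine Finset.sum_congr rfl fun k _ => ?_
    push_cast
    rw [Complex.exp_sub, Complex.exp_neg, div_pow]
    ring

theorem stmt8_general
    (n : ℕ) (ν : ℕ)
    (a : ℕ → ℕ → ℝ)
    (q : ℕ → ℝ → ℝ) (hqmeas : ∀ k < n, Measurable (q k))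
    (hqint : ∀ k < n, ∀ j < n, IntegrableOn (fun x => x ^ j * |q k x|) (Ioi 0))
    (P : ℕ → ℝ → ℝ)
    (hP : ∀ k < n, ∀ x : ℝ, P k x =
      ∑ j ∈ Finset.range (k + 1), a j k / (Nat.factorial (j + ν) : ℝ) * x ^ j)
    (Q : ℕ → ℝ → ℝ)
    (hQ : ∀ k < n, ∀ y ∈ Ioi (0:ℝ),
      Q k y = ∫ t in Ioi (0:ℝ), t ^ ν * Real.exp (-t) * q k (y / t) / t)
    (kn : ℂ → ℝ → ℂ)
    (hkn : ∀ (s : ℂ) (y : ℝ), kn s y = ∑ k ∈ Finset.range n,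
      (∑ j ∈ Finset.range (k + 1), (a j k : ℂ) * s ^ j) * (q k y : ℂ))
    (Kn : ℝ → ℝ → ℝ)
    (hKn : ∀ x y : ℝ, Kn x y = ∑ k ∈ Finset.range n, P k x * Q k y) :
    ∀ x ∈ Ioi (0:ℝ), ∀ y ∈ Ioi (0:ℝ), ∀ ρ : ℝ, 0 < ρ →
      (Kn x y : ℂ) = (2 * Real.pi * Complex.I)⁻¹ *
        ∮ s in C(0, ρ), (∫ t in Ioi (0:ℝ),
          kn ((x : ℂ) / s) (y / t) * ((t : ℂ) / s) ^ ν *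
            Complex.exp (s - (t : ℂ)) / (t : ℂ)) / s := by
  intro x _ y hy ρ hρ
  have hq : ∀ k ∈ Finset.range n, IntegrableOn (q k) (Ioi 0) := fun k hk => by
    have hk := Finset.mem_range.1 hk
    refine (integrable_norm_iff (hqmeas k hk).aestronglyMeasurable).1 ?_
    simpa [IntegrableOn] using hqint k hk 0 (k.zero_le.trans_lt hk)
  have hintegrable : ∀ k ∈ Finset.range n, CircleIntegrable (fun s => (Q k y : ℂ) *
      ((∑ j ∈ Finset.range (k + 1), (a j k : ℂ) * (x / s) ^ j) * Complex.exp s / s ^ (ν + 1)))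
      0 ρ := fun k _ => ContinuousOn.circleIntegrable hρ.le <| by
    fun_prop (disch := intro s hs; simp [ne_zero_of_mem_sphere hρ.ne' ⟨s, hs⟩])
  have hintegrand : (fun s : ℂ => (∫ t in Ioi (0 : ℝ), kn (x / s) (y / t) * ((t : ℂ) / s) ^ ν *
      Complex.exp (s - t) / t) / s) = fun s => ∑ k ∈ Finset.range n, (Q k y : ℂ) *
        ((∑ j ∈ Finset.range (k + 1), (a j k : ℂ) * (x / s) ^ j) * Complex.exp s /
          s ^ (ν + 1)) := by
    funext s
    simp only [hkn]
    rw [setIntegral_sum_mul_comp_div_mul_exp ν _ hq hy, Finset.sum_div]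
    refine Finset.sum_congr rfl fun k hk => ?_
    rw [hQ k (Finset.mem_range.1 hk) y hy, pow_succ]
    ring
  rw [hintegrand, circleIntegral.integral_fun_sum hintegrable, hKn, Finset.mul_sum]
  push_cast
  refine Finset.sum_congr rfl fun k hk => ?_
  rw [circleIntegral.integral_const_mul, circleIntegral_sum_div_pow_mul_exp hρ,
    hP k (Finset.mem_range.1 hk)]
  push_cast
  field_simp [Real.pi_ne_zero]

/-- Double contour integral formula for the correlation kernel of the squared
singular values after multiplication by a complex Ginibre matrix with
parameter `ν`. -/
theorem stmt8
    (n : ℕ) (hn : 1 ≤ n) (ν : ℕ)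
    (a : ℕ → ℕ → ℝ) (ha : ∀ k < n, a k k ≠ 0)
    (p : ℕ → ℝ → ℝ)
    (hp : ∀ k < n, ∀ x : ℝ, p k x = ∑ j ∈ Finset.range (k + 1), a j k * x ^ j)
    (q : ℕ → ℝ → ℝ) (hqmeas : ∀ k < n, Measurable (q k))
    (hqint : ∀ k < n, ∀ j < n, IntegrableOn (fun x => x ^ j * |q k x|) (Ioi 0))
    (hbiorth : ∀ j < n, ∀ k < n,
      ∫ x in Ioi (0:ℝ), p j x * q k x = if j = k then 1 else 0)
    (P : ℕ → ℝ → ℝ)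
    (hP : ∀ k < n, ∀ x : ℝ, P k x =
      ∑ j ∈ Finset.range (k + 1), a j k / (Nat.factorial (j + ν) : ℝ) * x ^ j)
    (Q : ℕ → ℝ → ℝ)
    (hQ : ∀ k < n, ∀ y ∈ Ioi (0:ℝ),
      Q k y = ∫ t in Ioi (0:ℝ), t ^ ν * Real.exp (-t) * q k (y / t) / t)
    (kn : ℂ → ℝ → ℂ)
    (hkn : ∀ (s : ℂ) (y : ℝ), kn s y = ∑ k ∈ Finset.range n,
      (∑ j ∈ Finset.range (k + 1), (a j k : ℂ) * s ^ j) * (q k y : ℂ))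
    (Kn : ℝ → ℝ → ℝ)
    (hKn : ∀ x y : ℝ, Kn x y = ∑ k ∈ Finset.range n, P k x * Q k y) :
    ∀ x ∈ Ioi (0:ℝ), ∀ y ∈ Ioi (0:ℝ), ∀ ρ : ℝ, 0 < ρ →
      (Kn x y : ℂ) = (2 * Real.pi * Complex.I)⁻¹ *
        ∮ s in C(0, ρ), (∫ t in Ioi (0:ℝ),
          kn ((x : ℂ) / s) (y / t) * ((t : ℂ) / s) ^ ν *
            Complex.exp (s - (t : ℂ)) / (t : ℂ)) / s :=
  stmt8_general n ν a q hqmeas hqint P hP Q hQ kn hkn Kn hKn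
end

section
/- Then the polynomial P_n(x) = Σ_{j=0}^{n} ((n+ν)!/(j+ν)!) a_j x^j is a monic polynomial of degree n, and ∫₀^∞ P_n(x) Q_k(x) dx = 0 for every k = 0,…,n−1. -/
/-!
`Q` is the multiplicative convolution of `q` with the Gamma weight `t ^ ν * exp (-t)`, so Fubini
and the substitution `x = t * u` give `∫ x ^ j * Q x = (j + ν)! * ∫ u ^ j * q u` on `(0, ∞)`.
The factor `(n + ν)! / (j + ν)!` in `P_n` is chosen to cancel this `(j + ν)!`, whence
`∫ P_n * Q_k = (n + ν)! * ∫ p_n * q_k = 0`.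
-/

open MeasureTheory Set

namespace Polynomial

theorem exists_monic_natDegree_eq_eval_eq_sum {R : Type*} [CommSemiring R] [Nontrivial R]
    {n : ℕ} (b : ℕ → R) (hb : b n = 1) :
    ∃ P : R[X], P.Monic ∧ P.natDegree = n ∧
      ∀ x, P.eval x = ∑ j ∈ Finset.range (n + 1), b j * x ^ j := by
  set P : R[X] := ∑ j ∈ Finset.range (n + 1), C (b j) * X ^ j
  have hcoeff : P.coeff n = 1 := by simp [P, finsetSum_coeff, hb]
  have hle : P.natDegree ≤ n :=
    natDegree_sum_le_of_forall_le _ _ fun j hj =>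
      (natDegree_C_mul_X_pow_le _ _).trans (Finset.mem_range_succ_iff.mp hj)
  refine ⟨P, monic_of_natDegree_le_of_coeff_eq_one n hle hcoeff,
    hle.antisymm (le_natDegree_of_ne_zero (by simp [hcoeff])), fun x => ?_⟩
  simp [P, eval_finsetSum]

end Polynomial

theorem integral_sum_pow_mul_s9 {μ : Measure ℝ} {f : ℝ → ℝ} {n : ℕ} (b : ℕ → ℝ)
    (hf : ∀ j ≤ n, Integrable (fun x => x ^ j * f x) μ) :
    Integrable (fun x => (∑ j ∈ Finset.range (n + 1), b j * x ^ j) * f x) μ ∧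
      ∫ x, (∑ j ∈ Finset.range (n + 1), b j * x ^ j) * f x ∂μ =
        ∑ j ∈ Finset.range (n + 1), b j * ∫ x, x ^ j * f x ∂μ := by
  have hterm : ∀ j ∈ Finset.range (n + 1), Integrable (fun x => b j * (x ^ j * f x)) μ :=
    fun j hj => (hf j (Finset.mem_range_succ_iff.mp hj)).const_mul _
  have hexpand : (fun x => (∑ j ∈ Finset.range (n + 1), b j * x ^ j) * f x) =
      fun x => ∑ j ∈ Finset.range (n + 1), b j * (x ^ j * f x) := by
    ext x; rw [Finset.sum_mul]; simp only [mul_assoc]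
  rw [hexpand]
  refine ⟨integrable_finsetSum _ hterm, ?_⟩
  rw [integral_finsetSum _ hterm]
  simp only [integral_const_mul]

theorem integrableOn_Ioi_pow_mul_of_abs {f : ℝ → ℝ} {j : ℕ} (hf : Measurable f)
    (h : IntegrableOn (fun x => x ^ j * |f x|) (Ioi 0)) :
    IntegrableOn (fun x => x ^ j * f x) (Ioi 0) := by
  refine h.mono' ((measurable_id.pow_const j).mul hf).aestronglyMeasurable ?_
  filter_upwards [ae_restrict_mem measurableSet_Ioi] with x hx
  rw [Real.norm_eq_abs, abs_mul, abs_pow, abs_of_pos hx]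

theorem integrableOn_Ioi_pow_mul_exp_neg (m : ℕ) :
    IntegrableOn (fun t : ℝ => t ^ m * Real.exp (-t)) (Ioi 0) := by
  refine (Real.GammaIntegral_convergent (s := m + 1) (by positivity)).congr_fun
    (fun t _ => ?_) measurableSet_Ioi
  simp [mul_comm]

theorem integral_Ioi_pow_mul_exp_neg (m : ℕ) :
    ∫ t in Ioi (0 : ℝ), t ^ m * Real.exp (-t) = m.factorial := by
  rw [← Real.Gamma_nat_eq_factorial, Real.Gamma_eq_integral (by positivity)]
  refine setIntegral_congr_fun measurableSet_Ioi fun t _ => ?_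
  simp [mul_comm]

section MellinConvolution

variable {j : ℕ}

theorem integrableOn_Ioi_pow_mul_comp_div {g : ℝ → ℝ} {t : ℝ} (ht : 0 < t)
    (hg : IntegrableOn (fun u => u ^ j * g u) (Ioi 0)) :
    IntegrableOn (fun x => x ^ j * g (x / t)) (Ioi 0) := by
  have h : IntegrableOn (fun x => t ^ j * ((t⁻¹ * x) ^ j * g (t⁻¹ * x))) (Ioi 0) :=
    ((integrableOn_Ioi_comp_mul_left_iff (fun u => u ^ j * g u) 0
      (inv_pos.mpr ht)).mpr (by simpa using hg)).const_mul (t ^ j)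
  refine h.congr_fun (fun x _ => ?_) measurableSet_Ioi
  dsimp only
  rw [← div_eq_inv_mul, div_pow]
  field_simp

theorem integral_Ioi_pow_mul_comp_div (g : ℝ → ℝ) {t : ℝ} (ht : 0 < t) :
    ∫ x in Ioi 0, x ^ j * g (x / t) = t ^ (j + 1) * ∫ u in Ioi 0, u ^ j * g u := by
  have h := integral_comp_mul_left_Ioi (fun u => u ^ j * g u) 0 (inv_pos.mpr ht)
  rw [mul_zero, inv_inv, smul_eq_mul] at h
  calc ∫ x in Ioi 0, x ^ j * g (x / t)
      = ∫ x in Ioi 0, t ^ j * ((t⁻¹ * x) ^ j * g (t⁻¹ * x)) :=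
        setIntegral_congr_fun measurableSet_Ioi fun x _ => by
          rw [← div_eq_inv_mul, div_pow]; field_simp
    _ = t ^ (j + 1) * ∫ u in Ioi 0, u ^ j * g u := by
        rw [integral_const_mul, h, pow_succ, mul_assoc]


variable {w q : ℝ → ℝ}

theorem integral_Ioi_pow_mul_mellinKernel {t : ℝ} (ht : 0 < t) :
    ∫ x in Ioi 0, x ^ j * (w t * q (x / t) / t) = t ^ j * w t * ∫ u in Ioi 0, u ^ j * q u := by
  calc ∫ x in Ioi 0, x ^ j * (w t * q (x / t) / t)
      = ∫ x in Ioi 0, w t / t * (x ^ j * q (x / t)) := by congr 1; ext x; ring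
    _ = t ^ j * w t * ∫ u in Ioi 0, u ^ j * q u := by
        rw [integral_const_mul, integral_Ioi_pow_mul_comp_div q ht, pow_succ]
        field_simp

theorem integral_Ioi_norm_pow_mul_mellinKernel {t : ℝ} (ht : 0 < t) :
    ∫ x in Ioi 0, ‖x ^ j * (w t * q (x / t) / t)‖ =
      ‖t ^ j * w t‖ * ∫ u in Ioi 0, u ^ j * |q u| := by
  calc ∫ x in Ioi 0, ‖x ^ j * (w t * q (x / t) / t)‖
      = ∫ x in Ioi 0, x ^ j * (|w t| * |q (x / t)| / t) :=
        setIntegral_congr_fun measurableSet_Ioi fun x (hx : 0 < x) => by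
          simp [abs_of_pos hx, abs_of_pos ht]
    _ = ‖t ^ j * w t‖ * ∫ u in Ioi 0, u ^ j * |q u| := by
        rw [integral_Ioi_pow_mul_mellinKernel (w := fun t => |w t|) (q := fun u => |q u|) ht]
        simp [abs_of_pos ht]

theorem integrable_mellinKernel (hw : Measurable w) (hwj : IntegrableOn (fun t => t ^ j * w t) (Ioi 0))
    (hq : Measurable q) (hqj : IntegrableOn (fun u => u ^ j * q u) (Ioi 0)) :
    Integrable (Function.uncurry fun t x => x ^ j * (w t * q (x / t) / t))
      ((volume.restrict (Ioi 0)).prod (volume.restrict (Ioi 0))) := by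
  have hmeas : Measurable (Function.uncurry fun t x : ℝ => x ^ j * (w t * q (x / t) / t)) := by
    fun_prop
  refine (integrable_prod_iff hmeas.aestronglyMeasurable).mpr ⟨?_, ?_⟩
  · filter_upwards [ae_restrict_mem measurableSet_Ioi] with t (ht : 0 < t)
    refine ((integrableOn_Ioi_pow_mul_comp_div ht hqj).const_mul (w t / t)).congr
      (ae_of_all _ fun x => ?_)
    simp only [Function.uncurry_apply_pair]
    ring
  · refine (hwj.norm.mul_const (∫ u in Ioi 0, u ^ j * |q u|)).congr ?_
    filter_upwards [ae_restrict_mem measurableSet_Ioi] with t (ht : 0 < t)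
    exact (integral_Ioi_norm_pow_mul_mellinKernel ht).symm

theorem integral_Ioi_pow_mul_mellinConv (hw : Measurable w)
    (hwj : IntegrableOn (fun t => t ^ j * w t) (Ioi 0))
    (hq : Measurable q) (hqj : IntegrableOn (fun u => u ^ j * q u) (Ioi 0)) :
    IntegrableOn (fun x => x ^ j * ∫ t in Ioi 0, w t * q (x / t) / t) (Ioi 0) ∧
      ∫ x in Ioi 0, x ^ j * ∫ t in Ioi 0, w t * q (x / t) / t =
        (∫ t in Ioi 0, t ^ j * w t) * ∫ u in Ioi 0, u ^ j * q u := by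
  have hK := integrable_mellinKernel hw hwj hq hqj
  have hpull : (fun x => x ^ j * ∫ t in Ioi 0, w t * q (x / t) / t) =
      fun x => ∫ t in Ioi 0, x ^ j * (w t * q (x / t) / t) := by
    ext x; exact (integral_const_mul _ _).symm
  rw [hpull]
  refine ⟨hK.integral_prod_right, ?_⟩
  rw [← integral_integral_swap hK, ← integral_mul_const]
  exact setIntegral_congr_fun measurableSet_Ioi fun t ht => integral_Ioi_pow_mul_mellinKernel ht

end MellinConvolution

theorem integral_Ioi_pow_mul_gammaConv {ν j : ℕ} {q Q : ℝ → ℝ} (hq : Measurable q)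
    (hqj : IntegrableOn (fun u => u ^ j * q u) (Ioi 0))
    (hQ : ∀ y ∈ Ioi (0 : ℝ), Q y = ∫ t in Ioi (0 : ℝ), t ^ ν * Real.exp (-t) * q (y / t) / t) :
    IntegrableOn (fun x => x ^ j * Q x) (Ioi 0) ∧
      ∫ x in Ioi 0, x ^ j * Q x = (j + ν).factorial * ∫ u in Ioi 0, u ^ j * q u := by
  have hweight : ∀ t : ℝ, t ^ j * (t ^ ν * Real.exp (-t)) = t ^ (j + ν) * Real.exp (-t) :=
    fun t => by ring
  obtain ⟨hint, hval⟩ := integral_Ioi_pow_mul_mellinConv (w := fun t => t ^ ν * Real.exp (-t))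
    (by fun_prop) (by simpa only [hweight] using integrableOn_Ioi_pow_mul_exp_neg (j + ν)) hq hqj
  have hQ' : EqOn (fun x => x ^ j * Q x)
      (fun x => x ^ j * ∫ t in Ioi 0, t ^ ν * Real.exp (-t) * q (x / t) / t) (Ioi 0) :=
    fun x hx => congrArg (x ^ j * ·) (hQ x hx)
  refine ⟨hint.congr_fun hQ'.symm measurableSet_Ioi, ?_⟩
  rw [setIntegral_congr_fun measurableSet_Ioi hQ', hval]
  simp only [hweight, integral_Ioi_pow_mul_exp_neg]

theorem stmt9_general
    (n : ℕ) (ν : ℕ)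
    (q : ℕ → ℝ → ℝ) (hqmeas : ∀ k < n, Measurable (q k))
    (hqint : ∀ k < n, ∀ j ≤ n, IntegrableOn (fun x => x ^ j * |q k x|) (Ioi 0))
    (Q : ℕ → ℝ → ℝ)
    (hQ : ∀ k < n, ∀ y ∈ Ioi (0:ℝ),
      Q k y = ∫ t in Ioi (0:ℝ), t ^ ν * Real.exp (-t) * q k (y / t) / t)
    (a : ℕ → ℝ) (hmonic : a n = 1)
    (pn : ℝ → ℝ)
    (hpn : ∀ x : ℝ, pn x = ∑ j ∈ Finset.range (n + 1), a j * x ^ j)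
    (horth : ∀ k < n, ∫ x in Ioi (0:ℝ), pn x * q k x = 0)
    (Pn : ℝ → ℝ)
    (hPn : ∀ x : ℝ, Pn x = ∑ j ∈ Finset.range (n + 1),
      (Nat.factorial (n + ν) : ℝ) / (Nat.factorial (j + ν) : ℝ) * a j * x ^ j) :
    (∃ P : Polynomial ℝ, P.Monic ∧ P.natDegree = n ∧ ∀ x : ℝ, Pn x = P.eval x) ∧
    ∀ k < n,
      IntegrableOn (fun x => Pn x * Q k x) (Ioi 0) ∧
      ∫ x in Ioi (0:ℝ), Pn x * Q k x = 0 := by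
  obtain rfl : pn = _ := funext hpn
  obtain rfl : Pn = _ := funext hPn
  constructor
  · obtain ⟨P, hmon, hdeg, heval⟩ := Polynomial.exists_monic_natDegree_eq_eval_eq_sum
      (fun j => (Nat.factorial (n + ν) : ℝ) / (Nat.factorial (j + ν) : ℝ) * a j)
      (by rw [hmonic, mul_one, div_self (by positivity)])
    exact ⟨P, hmon, hdeg, fun x => (heval x).symm⟩
  intro k hk
  have hmom : ∀ j ≤ n, IntegrableOn (fun u => u ^ j * q k u) (Ioi 0) :=
    fun j hj => integrableOn_Ioi_pow_mul_of_abs (hqmeas k hk) (hqint k hk j hj)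
  have hQmom := fun j (hj : j ≤ n) => integral_Ioi_pow_mul_gammaConv (hqmeas k hk) (hmom j hj) (hQ k hk)
  obtain ⟨hint, hval⟩ := integral_sum_pow_mul_s9
    (fun j => (Nat.factorial (n + ν) : ℝ) / (Nat.factorial (j + ν) : ℝ) * a j)
    fun j hj => (hQmom j hj).1
  refine ⟨hint, ?_⟩
  calc _ = ∑ j ∈ Finset.range (n + 1),
        (Nat.factorial (n + ν) : ℝ) / (Nat.factorial (j + ν) : ℝ) * a j *
          ((j + ν).factorial * ∫ u in Ioi 0, u ^ j * q k u) := by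
        rw [hval]
        exact Finset.sum_congr rfl fun j hj =>
          by rw [(hQmom j (Finset.mem_range_succ_iff.mp hj)).2]
    _ = (n + ν).factorial * ∫ x in Ioi 0, (∑ j ∈ Finset.range (n + 1), a j * x ^ j) * q k x := by
        rw [(integral_sum_pow_mul_s9 a hmom).2, Finset.mul_sum]
        refine Finset.sum_congr rfl fun j _ => ?_
        field_simp
    _ = 0 := by rw [horth k hk, mul_zero]

/-- The average characteristic polynomial after multiplication by a Ginibre
matrix: `P_n(x) = Σ_j ((n+ν)!/(j+ν)!) a_j x^j` is a monic polynomial of degree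
`n` orthogonal to all the transformed dual functions `Q_k`, `k < n`. -/
theorem stmt9
    (n : ℕ) (hn : 1 ≤ n) (ν : ℕ)
    (q : ℕ → ℝ → ℝ) (hqmeas : ∀ k < n, Measurable (q k))
    (hqint : ∀ k < n, ∀ j ≤ n, IntegrableOn (fun x => x ^ j * |q k x|) (Ioi 0))
    (Q : ℕ → ℝ → ℝ)
    (hQ : ∀ k < n, ∀ y ∈ Ioi (0:ℝ),
      Q k y = ∫ t in Ioi (0:ℝ), t ^ ν * Real.exp (-t) * q k (y / t) / t)
    (a : ℕ → ℝ) (hmonic : a n = 1)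
    (pn : ℝ → ℝ)
    (hpn : ∀ x : ℝ, pn x = ∑ j ∈ Finset.range (n + 1), a j * x ^ j)
    (horth : ∀ k < n, ∫ x in Ioi (0:ℝ), pn x * q k x = 0)
    (Pn : ℝ → ℝ)
    (hPn : ∀ x : ℝ, Pn x = ∑ j ∈ Finset.range (n + 1),
      (Nat.factorial (n + ν) : ℝ) / (Nat.factorial (j + ν) : ℝ) * a j * x ^ j) :
    (∃ P : Polynomial ℝ, P.Monic ∧ P.natDegree = n ∧ ∀ x : ℝ, Pn x = P.eval x) ∧
    ∀ k < n,
      IntegrableOn (fun x => Pn x * Q k x) (Ioi 0) ∧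
      ∫ x in Ioi (0:ℝ), Pn x * Q k x = 0 :=
  stmt9_general n ν q hqmeas hqint Q hQ a hmonic pn hpn horth Pn hPn
end

section
/- Define k_n(x,y) = Σ_{k=0}^{n−1} p_k(x) q_k(y) (where x may be complex) and K_n(x,y) = Σ_{k=0}^{n−1} P_k(x) Q_k(y). Then for all x, y > 0 and every ρ with 0 < ρ < 1, K_n(x,y) = (μ/2πi) ∮_{|s|=ρ} ( ∫₀^1 (t/s)^ν k_n(x/s, y/t) (1−s)^{−μ−1} (1−t)^{μ−1} dt/t ) ds/s, where the contour is the counterclockwise circle of radius ρ centered at 0. -/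
/-!
Integrating `q_k(y/t)` against the beta weight `t^ν (1-t)^(μ-1) dt/t` gives `Q_k(y)`, so the
right-hand side is a finite combination of the contour integrals
`∮ s^(-m-1) (1-s)^(-μ-1) ds = 2πi · C(m+μ, m)` (the coefficient of `s^m` in `(1-s)^(-μ-1)`).
These follow from Cauchy's formula for `m = 0` and from Pascal's rule, which is the identity
`(1 - s) + s = 1` under the integral. Finally `μ · C(m+μ, m) = (m+μ)! / (m! (μ-1)!)` turns the
coefficients of `p_k` into those of `P_k`.
-/

open MeasureTheory Set

section ContourIntegral

open Real

variable {ρ : ℝ}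

lemma one_sub_ne_zero_of_norm_lt_one {z : ℂ} (hz : ‖z‖ < 1) : 1 - z ≠ 0 := by
  rw [sub_ne_zero]
  rintro rfl
  simp at hz

lemma ne_zero_and_one_sub_ne_zero_of_mem_sphere (h0 : 0 < ρ) (h1 : ρ < 1) {s : ℂ}
    (hs : s ∈ Metric.sphere (0 : ℂ) ρ) : s ≠ 0 ∧ 1 - s ≠ 0 := by
  rw [mem_sphere_zero_iff_norm] at hs
  exact ⟨norm_pos_iff.mp (hs ▸ h0), one_sub_ne_zero_of_norm_lt_one (hs ▸ h1)⟩

lemma circleIntegrable_zpow_mul_one_sub_zpow (h0 : 0 < ρ) (h1 : ρ < 1) (m l : ℤ) :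
    CircleIntegrable (fun s : ℂ => s ^ m * (1 - s) ^ l) 0 ρ := by
  refine ContinuousOn.circleIntegrable h0.le fun s hs => ?_
  obtain ⟨hs0, hs1⟩ := ne_zero_and_one_sub_ne_zero_of_mem_sphere h0 h1 hs
  exact ((continuousAt_zpow₀ s m (Or.inl hs0)).mul
    ((continuousAt_zpow₀ (1 - s) l (Or.inl hs1)).comp (by fun_prop))).continuousWithinAt

lemma circleIntegral_inv_mul_one_sub_zpow (h0 : 0 < ρ) (h1 : ρ < 1) (l : ℤ) :
    (∮ s in C(0, ρ), s ^ (-1 : ℤ) * (1 - s) ^ l) = 2 * π * Complex.I := by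
  have hd : DifferentiableOn ℂ (fun s : ℂ => (1 - s) ^ l) (Metric.closedBall 0 ρ) := by
    intro z hz
    have hz1 := one_sub_ne_zero_of_norm_lt_one ((mem_closedBall_zero_iff.mp hz).trans_lt h1)
    exact ((differentiableAt_zpow.mpr (Or.inl hz1)).comp z (by fun_prop)).differentiableWithinAt
  simpa using hd.circleIntegral_sub_inv_smul (Metric.mem_ball_self h0)

lemma circleIntegral_zpow_mul_one_sub_zpow_sub_one (h0 : 0 < ρ) (h1 : ρ < 1) (A B : ℤ) :
    (∮ s in C(0, ρ), s ^ (A - 1) * (1 - s) ^ (B - 1)) =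
      (∮ s in C(0, ρ), s ^ (A - 1) * (1 - s) ^ B) +
        ∮ s in C(0, ρ), s ^ A * (1 - s) ^ (B - 1) := by
  rw [← circleIntegral.integral_add (circleIntegrable_zpow_mul_one_sub_zpow h0 h1 _ _)
    (circleIntegrable_zpow_mul_one_sub_zpow h0 h1 _ _)]
  refine circleIntegral.integral_congr h0.le fun s hs => ?_
  obtain ⟨hs0, hs1⟩ := ne_zero_and_one_sub_ne_zero_of_mem_sphere h0 h1 hs
  rw [zpow_sub_one₀ hs0, zpow_sub_one₀ hs1]
  field_simp
  ring

lemma circleIntegral_zpow_mul_one_sub_zpow (h0 : 0 < ρ) (h1 : ρ < 1) (m l : ℕ) :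
    (∮ s in C(0, ρ), s ^ (-(m : ℤ) - 1) * (1 - s) ^ (-(l : ℤ) - 1)) =
      2 * π * Complex.I * (m + l).choose m := by
  induction m generalizing l with
  | zero =>
    rw [show (-((0 : ℕ) : ℤ) - 1) = -1 by simp, circleIntegral_inv_mul_one_sub_zpow h0 h1]
    simp
  | succ m ihm =>
    have hm : (-((m + 1 : ℕ) : ℤ) - 1) = (-(m : ℤ) - 1) - 1 := by push_cast; ring
    induction l with
    | zero =>
      have hvanish : (∮ s in C(0, ρ), s ^ ((-(m : ℤ) - 1) - 1) * (1 - s) ^ (0 : ℤ)) = 0 := by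
        simpa using
          circleIntegral.integral_sub_zpow_of_ne (by omega : (-(m : ℤ) - 1) - 1 ≠ -1) 0 0 ρ
      have h00 : (-((0 : ℕ) : ℤ) - 1) = 0 - 1 := by simp
      rw [hm, h00, circleIntegral_zpow_mul_one_sub_zpow_sub_one h0 h1, hvanish, ← h00, ihm]
      simp
    | succ l ihl =>
      have hl : (-((l + 1 : ℕ) : ℤ) - 1) = (-(l : ℤ) - 1) - 1 := by push_cast; ring
      rw [hm, hl, circleIntegral_zpow_mul_one_sub_zpow_sub_one h0 h1, ← hm, ← hl, ihl, ihm,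
        show m + 1 + (l + 1) = (m + l + 1) + 1 by ring, Nat.choose_succ_succ,
        show m + (l + 1) = m + l + 1 by ring, show m + 1 + l = m + l + 1 by ring]
      push_cast
      ring

lemma circleIntegral_finset_sum_const_mul_zpow {ι : Type*} (h0 : 0 < ρ) (h1 : ρ < 1)
    (u : Finset ι) (c : ι → ℂ) (m : ι → ℕ) (l : ℕ) :
    (∮ s in C(0, ρ), ∑ i ∈ u, c i * (s ^ (-(m i : ℤ) - 1) * (1 - s) ^ (-(l : ℤ) - 1))) =
      2 * π * Complex.I * ∑ i ∈ u, c i * (m i + l).choose (m i) := by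
  rw [circleIntegral.integral_fun_sum
    (f := fun i s => c i * (s ^ (-(m i : ℤ) - 1) * (1 - s) ^ (-(l : ℤ) - 1))) fun i _ =>
      (circleIntegrable_zpow_mul_one_sub_zpow h0 h1 _ _).const_smul (a := c i)]
  simp only [circleIntegral.integral_const_mul, circleIntegral_zpow_mul_one_sub_zpow h0 h1,
    Finset.mul_sum]
  exact Finset.sum_congr rfl fun i _ => by ring

end ContourIntegral

lemma integrableOn_Ioo_smul_comp_div {E : Type*} [NormedAddCommGroup E] [NormedSpace ℝ E]
    {g : ℝ → E} {y : ℝ} (hy : 0 < y) (hg : IntegrableOn g (Ioi y)) :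
    IntegrableOn (fun t => (y / t ^ 2) • g (y / t)) (Ioo 0 1) := by
  have himage : (fun t : ℝ => y / t) '' Ioo 0 1 = Ioi y := by
    ext u
    constructor
    · rintro ⟨t, ⟨ht0, ht1⟩, rfl⟩
      exact (lt_div_iff₀ ht0).mpr (by nlinarith)
    · intro hu
      have hu0 : 0 < u := hy.trans hu
      exact ⟨y / u, ⟨div_pos hy hu0, (div_lt_one hu0).mpr hu⟩, by field_simp⟩
  have hderiv : ∀ t ∈ Ioo (0 : ℝ) 1,
      HasDerivWithinAt (fun t => y / t) (-(y / t ^ 2)) (Ioo 0 1) t := fun t ht => by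
    simpa [div_eq_mul_inv] using ((hasDerivAt_inv ht.1.ne').const_mul y).hasDerivWithinAt
  have hinj : InjOn (fun t : ℝ => y / t) (Ioo 0 1) := fun t₁ ht₁ t₂ ht₂ h =>
    inv_injective (mul_left_cancel₀ hy.ne' h)
  rw [← himage, integrableOn_image_iff_integrableOn_abs_deriv_smul measurableSet_Ioo hderiv hinj]
    at hg
  refine hg.congr_fun (fun t ht => ?_) measurableSet_Ioo
  beta_reduce
  rw [abs_neg, abs_of_pos (div_pos hy (pow_pos ht.1 2))]

lemma integrableOn_Ioo_mul_comp_div {g : ℝ → ℝ} {y : ℝ} (hy : 0 < y)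
    (hg : IntegrableOn g (Ioi 0)) (ν m : ℕ) :
    IntegrableOn (fun t => t ^ ν * (1 - t) ^ m * g (y / t) / t) (Ioo 0 1) := by
  have hbound : ∀ᵐ t ∂volume.restrict (Ioo (0 : ℝ) 1),
      ‖t ^ (ν + 1) * (1 - t) ^ m / y‖ ≤ 1 / y := by
    refine (ae_restrict_iff' measurableSet_Ioo).mpr (.of_forall fun t ⟨ht0, ht1⟩ => ?_)
    rw [Real.norm_eq_abs, abs_of_nonneg (by positivity)]
    gcongr
    calc t ^ (ν + 1) * (1 - t) ^ m ≤ 1 * 1 := by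
          gcongr
          · exact pow_le_one₀ ht0.le ht1.le
          · exact pow_le_one₀ (by linarith) (by linarith)
      _ = 1 := one_mul 1
  have hint : IntegrableOn (fun t => t ^ (ν + 1) * (1 - t) ^ m / y * ((y / t ^ 2) • g (y / t)))
      (Ioo 0 1) := (integrableOn_Ioo_smul_comp_div hy (hg.mono_set (Ioi_subset_Ioi hy.le))).bdd_mul
    (by fun_prop : Measurable fun t : ℝ => t ^ (ν + 1) * (1 - t) ^ m / y).aestronglyMeasurable
    hbound
  refine hint.congr_fun (fun t ht => ?_) measurableSet_Ioo
  have ht0 : t ≠ 0 := ht.1.ne'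
  simp only [smul_eq_mul]
  field_simp
  ring

lemma integral_finset_sum_mul_ofReal {α ι : Type*} [MeasurableSpace α]
    {μ : Measure α} (u : Finset ι) (c : ι → ℂ) {F : ι → α → ℝ}
    (hF : ∀ i ∈ u, Integrable (F i) μ) :
    ∫ t, ∑ i ∈ u, c i * (F i t : ℂ) ∂μ = ∑ i ∈ u, c i * ∫ t, F i t ∂μ := by
  rw [integral_finsetSum (f := fun i t => c i * (F i t : ℂ)) u fun i hi =>
    (hF i hi).ofReal.const_mul (c i)]
  simp only [integral_const_mul, integral_complex_ofReal]

open Nat in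
lemma factorial_pred_inv_mul_sum_factorial_div (ν : ℕ) {μ : ℕ} (hμ : 1 ≤ μ) (u : Finset ℕ)
    (c : ℕ → ℝ) :
    ((μ - 1)! : ℝ)⁻¹ * ∑ j ∈ u, (j + ν + μ)! / (j + ν)! * c j =
      μ * ∑ j ∈ u, (j + ν + μ).choose (j + ν) * c j := by
  simp only [Finset.mul_sum]
  refine Finset.sum_congr rfl fun j _ => ?_
  have hchoose : (j + ν + μ).choose (j + ν) * (j + ν)! * (μ * (μ - 1)!) = (j + ν + μ)! := by
    rw [mul_factorial_pred (by omega), ← add_choose_mul_factorial_mul_factorial (j + ν) μ,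
      choose_symm_add]
  rw [← hchoose]
  push_cast
  field_simp

section Kernel

variable {n ν μ : ℕ} {a : ℕ → ℕ → ℝ} {x y : ℝ} {s : ℂ}

lemma setIntegral_Ioo_kernel_eq_sum {q : ℕ → ℝ → ℝ} {Q : ℕ → ℝ}
    (hF : ∀ k ∈ Finset.range n,
      IntegrableOn (fun t => t ^ ν * (1 - t) ^ (μ - 1) * q k (y / t) / t) (Ioo 0 1))
    (hQ : ∀ k < n, Q k = ∫ t in Ioo (0:ℝ) 1, t ^ ν * (1 - t) ^ (μ - 1) * q k (y / t) / t) :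
    (∫ t in Ioo (0:ℝ) 1, ((t : ℂ) / s) ^ ν *
        (∑ k ∈ Finset.range n, (∑ j ∈ Finset.range (k + 1), (a j k : ℂ) * ((x : ℂ) / s) ^ j) *
          (q k (y / t) : ℂ)) *
        (1 - s) ^ (-(μ : ℤ) - 1) * ((1 - t : ℝ) : ℂ) ^ (μ - 1) / (t : ℂ)) =
      ∑ k ∈ Finset.range n, (∑ j ∈ Finset.range (k + 1), (a j k : ℂ) * ((x : ℂ) / s) ^ j) *
        (1 - s) ^ (-(μ : ℤ) - 1) / s ^ ν * (Q k : ℂ) := by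
  have hintegrand : ∀ t : ℝ, ((t : ℂ) / s) ^ ν *
      (∑ k ∈ Finset.range n, (∑ j ∈ Finset.range (k + 1), (a j k : ℂ) * ((x : ℂ) / s) ^ j) *
        (q k (y / t) : ℂ)) * (1 - s) ^ (-(μ : ℤ) - 1) * ((1 - t : ℝ) : ℂ) ^ (μ - 1) / (t : ℂ) =
      ∑ k ∈ Finset.range n,
        ((∑ j ∈ Finset.range (k + 1), (a j k : ℂ) * ((x : ℂ) / s) ^ j) *
          (1 - s) ^ (-(μ : ℤ) - 1) / s ^ ν) *
        ((t ^ ν * (1 - t) ^ (μ - 1) * q k (y / t) / t : ℝ) : ℂ) := fun t => by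
    simp only [Finset.mul_sum, Finset.sum_mul, Finset.sum_div]
    refine Finset.sum_congr rfl fun k _ => Finset.sum_congr rfl fun j _ => ?_
    push_cast
    ring
  simp_rw [hintegrand]
  rw [integral_finset_sum_mul_ofReal _ _ hF]
  exact Finset.sum_congr rfl fun k hk => by rw [hQ k (Finset.mem_range.mp hk)]

lemma sum_mul_div_pow_div_eq_sum_sigma (hs : s ≠ 0) (b : ℕ → ℝ) (w : ℂ) :
    (∑ k ∈ Finset.range n, (∑ j ∈ Finset.range (k + 1), (a j k : ℂ) * ((x : ℂ) / s) ^ j) *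
        w / s ^ ν * (b k : ℂ)) / s =
      ∑ i ∈ (Finset.range n).sigma fun k => Finset.range (k + 1),
        ((a i.2 i.1 * x ^ i.2 * b i.1 : ℝ) : ℂ) * (s ^ (-((i.2 + ν : ℕ) : ℤ) - 1) * w) := by
  rw [Finset.sum_div, Finset.sum_sigma]
  refine Finset.sum_congr rfl fun k _ => ?_
  simp only [Finset.sum_mul, Finset.sum_div]
  refine Finset.sum_congr rfl fun j _ => ?_
  rw [show -((j + ν : ℕ) : ℤ) - 1 = -((j + ν + 1 : ℕ) : ℤ) by push_cast; ring, zpow_neg,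
    zpow_natCast]
  push_cast
  rw [div_pow]
  field_simp
  ring

end Kernel

theorem stmt12_general
    (n : ℕ) (ν μ : ℕ) (hμ : 1 ≤ μ)
    (a : ℕ → ℕ → ℝ)
    (q : ℕ → ℝ → ℝ) (hqmeas : ∀ k < n, Measurable (q k))
    (hqint : ∀ k < n, ∀ j < n, IntegrableOn (fun x => x ^ j * |q k x|) (Ioi 0))
    (P : ℕ → ℝ → ℝ)
    (hP : ∀ k < n, ∀ x : ℝ, P k x = (Nat.factorial (μ - 1) : ℝ)⁻¹ *
      ∑ j ∈ Finset.range (k + 1),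
        (Nat.factorial (j + ν + μ) : ℝ) / (Nat.factorial (j + ν) : ℝ) * a j k * x ^ j)
    (Q : ℕ → ℝ → ℝ)
    (hQ : ∀ k < n, ∀ y ∈ Ioi (0:ℝ),
      Q k y = ∫ t in Ioo (0:ℝ) 1, t ^ ν * (1 - t) ^ (μ - 1) * q k (y / t) / t)
    (kn : ℂ → ℝ → ℂ)
    (hkn : ∀ (s : ℂ) (y : ℝ), kn s y = ∑ k ∈ Finset.range n,
      (∑ j ∈ Finset.range (k + 1), (a j k : ℂ) * s ^ j) * (q k y : ℂ))
    (Kn : ℝ → ℝ → ℝ)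
    (hKn : ∀ x y : ℝ, Kn x y = ∑ k ∈ Finset.range n, P k x * Q k y) :
    ∀ x ∈ Ioi (0:ℝ), ∀ y ∈ Ioi (0:ℝ), ∀ ρ : ℝ, 0 < ρ → ρ < 1 →
      (Kn x y : ℂ) = (μ : ℂ) * (2 * Real.pi * Complex.I)⁻¹ *
        ∮ s in C(0, ρ), (∫ t in Ioo (0:ℝ) 1,
          ((t : ℂ) / s) ^ ν * kn ((x : ℂ) / s) (y / t) *
            (1 - s) ^ (-(μ : ℤ) - 1) * ((1 - t : ℝ) : ℂ) ^ (μ - 1) / (t : ℂ)) / s := by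
  intro x _ y hy ρ hρ0 hρ1
  have hF : ∀ k ∈ Finset.range n,
      IntegrableOn (fun t => t ^ ν * (1 - t) ^ (μ - 1) * q k (y / t) / t) (Ioo 0 1) := by
    intro k hk
    have hk := Finset.mem_range.mp hk
    refine integrableOn_Ioo_mul_comp_div hy ?_ ν (μ - 1)
    refine (integrable_norm_iff (hqmeas k hk).aestronglyMeasurable).mp ?_
    exact (by simpa using hqint k hk 0 (by omega) : IntegrableOn (fun x => |q k x|) (Ioi 0))
  simp only [hkn]
  rw [circleIntegral.integral_congr hρ0.le fun s hs => by
      rw [setIntegral_Ioo_kernel_eq_sum hF fun k hk => hQ k hk y hy,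
        sum_mul_div_pow_div_eq_sum_sigma (ne_zero_and_one_sub_ne_zero_of_mem_sphere hρ0 hρ1 hs).1],
    circleIntegral_finset_sum_const_mul_zpow hρ0 hρ1, ← mul_assoc, mul_assoc (μ : ℂ),
    inv_mul_cancel₀ Complex.two_pi_I_ne_zero, mul_one, hKn, Finset.sum_sigma, Finset.mul_sum]
  push_cast
  refine Finset.sum_congr rfl fun k hk => ?_
  simp only [hP k (Finset.mem_range.mp hk), mul_assoc,
    factorial_pred_inv_mul_sum_factorial_div ν hμ]
  push_cast
  simp only [Finset.mul_sum, Finset.sum_mul]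
  refine Finset.sum_congr rfl fun j _ => ?_
  ring

/-- Double contour integral formula for the correlation kernel of the squared
singular values after multiplication by a truncated Haar unitary matrix with
parameters `ν, μ`. -/
theorem stmt12
    (n : ℕ) (hn : 1 ≤ n) (ν μ : ℕ) (hμ : 1 ≤ μ)
    (a : ℕ → ℕ → ℝ) (ha : ∀ k < n, a k k ≠ 0)
    (p : ℕ → ℝ → ℝ)
    (hp : ∀ k < n, ∀ x : ℝ, p k x = ∑ j ∈ Finset.range (k + 1), a j k * x ^ j)
    (q : ℕ → ℝ → ℝ) (hqmeas : ∀ k < n, Measurable (q k))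
    (hqint : ∀ k < n, ∀ j < n, IntegrableOn (fun x => x ^ j * |q k x|) (Ioi 0))
    (hbiorth : ∀ j < n, ∀ k < n,
      ∫ x in Ioi (0:ℝ), p j x * q k x = if j = k then 1 else 0)
    (P : ℕ → ℝ → ℝ)
    (hP : ∀ k < n, ∀ x : ℝ, P k x = (Nat.factorial (μ - 1) : ℝ)⁻¹ *
      ∑ j ∈ Finset.range (k + 1),
        (Nat.factorial (j + ν + μ) : ℝ) / (Nat.factorial (j + ν) : ℝ) * a j k * x ^ j)
    (Q : ℕ → ℝ → ℝ)
    (hQ : ∀ k < n, ∀ y ∈ Ioi (0:ℝ),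
      Q k y = ∫ t in Ioo (0:ℝ) 1, t ^ ν * (1 - t) ^ (μ - 1) * q k (y / t) / t)
    (kn : ℂ → ℝ → ℂ)
    (hkn : ∀ (s : ℂ) (y : ℝ), kn s y = ∑ k ∈ Finset.range n,
      (∑ j ∈ Finset.range (k + 1), (a j k : ℂ) * s ^ j) * (q k y : ℂ))
    (Kn : ℝ → ℝ → ℝ)
    (hKn : ∀ x y : ℝ, Kn x y = ∑ k ∈ Finset.range n, P k x * Q k y) :
    ∀ x ∈ Ioi (0:ℝ), ∀ y ∈ Ioi (0:ℝ), ∀ ρ : ℝ, 0 < ρ → ρ < 1 →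
      (Kn x y : ℂ) = (μ : ℂ) * (2 * Real.pi * Complex.I)⁻¹ *
        ∮ s in C(0, ρ), (∫ t in Ioo (0:ℝ) 1,
          ((t : ℂ) / s) ^ ν * kn ((x : ℂ) / s) (y / t) *
            (1 - s) ^ (-(μ : ℤ) - 1) * ((1 - t : ℝ) : ℂ) ^ (μ - 1) / (t : ℂ)) / s :=
  stmt12_general n ν μ hμ a q hqmeas hqint P hP Q hQ kn hkn Kn hKn
end

section
/- The rank of the n × n matrix I_n − Y*Y (where Y* denotes the conjugate transpose of Y) is at most μ_1 + ⋯ + μ_r. Consequently, if d := n − (μ_1 + ⋯ + μ_r) ≥ 1, then the kernel of I_n − Y*Y has dimension at least d; in particular Y has the singular value 1 with multiplicity at least d. -/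
/-!
If `T` is a corner of a unitary `U`, the columns of `U` that `T` meets are orthonormal, so
`1 - TᴴT = BᴴB` with `B` the part of those columns below `T`; hence `rank (1 - TᴴT) ≤ μ`.
The identity `1 - (TY)ᴴ(TY) = (1 - YᴴY) + Yᴴ(1 - TᴴT)Y` and subadditivity of rank add these
defects up along the product, and rank–nullity turns the rank bound into the kernel bound.
-/

open Matrix

/-- The upper-left `p × q` corner truncation of an `m × m` matrix. -/
def cornerTrunc {m p q : ℕ} (hp : p ≤ m) (hq : q ≤ m)
    (U : Matrix (Fin m) (Fin m) ℂ) : Matrix (Fin p) (Fin q) ℂ :=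
  Matrix.of fun a b => U (Fin.castLE hp a) (Fin.castLE hq b)

/-- The product `T_r ⋯ T_1` (indexed so that `T j` in Lean is `T_{j+1}`). -/
noncomputable def truncProd (n : ℕ) (ν : ℕ → ℕ)
    (T : (j : ℕ) → Matrix (Fin (n + ν (j + 1))) (Fin (n + ν j)) ℂ) :
    (r : ℕ) → Matrix (Fin (n + ν r)) (Fin (n + ν 0)) ℂ
  | 0 => 1
  | r + 1 => T r * truncProd n ν T r

namespace Matrix

variable {m n o : Type*}

theorem conjTranspose_mul_self_eq_add_fin_add {α : Type*} [Semiring α] [StarRing α] {p s : ℕ}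
    (V : Matrix (Fin (p + s)) n α) :
    Vᴴ * V = (V.submatrix (Fin.castAdd s) id)ᴴ * V.submatrix (Fin.castAdd s) id +
      (V.submatrix (Fin.natAdd p) id)ᴴ * V.submatrix (Fin.natAdd p) id := by
  ext i j
  simp [mul_apply, Fin.sum_univ_add]

variable {K : Type*} [Field K] [Fintype n]

theorem rank_add_le (A B : Matrix m n K) : (A + B).rank ≤ A.rank + B.rank := by
  have hrange : LinearMap.range (A + B).mulVecLin ≤
      LinearMap.range A.mulVecLin ⊔ LinearMap.range B.mulVecLin := by
    rw [mulVecLin_add]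
    rintro _ ⟨v, rfl⟩
    exact Submodule.add_mem_sup (LinearMap.mem_range_self _ v) (LinearMap.mem_range_self _ v)
  exact (Submodule.finrank_mono hrange).trans
    (Submodule.finrank_add_le_finrank_add_finrank _ _)

theorem rank_one_sub_conjTranspose_mul_self_mul_le [StarRing K] [Fintype m] [DecidableEq m]
    [DecidableEq n] [Fintype o] (T : Matrix o m K) (Y : Matrix m n K) :
    (1 - (T * Y)ᴴ * (T * Y)).rank ≤ (1 - Yᴴ * Y).rank + (1 - Tᴴ * T).rank := by
  have hsplit : 1 - (T * Y)ᴴ * (T * Y) = (1 - Yᴴ * Y) + Yᴴ * ((1 - Tᴴ * T) * Y) := by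
    simp only [conjTranspose_mul, Matrix.sub_mul, Matrix.mul_sub, Matrix.one_mul,
      Matrix.mul_assoc]
    abel
  rw [hsplit]
  exact (rank_add_le _ _).trans <|
    Nat.add_le_add_left ((rank_mul_le_right _ _).trans (rank_mul_le_left _ _)) _

end Matrix

theorem rank_one_sub_conjTranspose_mul_self_cornerTrunc_le {p q s : ℕ} (hq : q ≤ p + s)
    (U : Matrix (Fin (p + s)) (Fin (p + s)) ℂ) (hU : Uᴴ * U = 1) :
    (1 - (cornerTrunc (Nat.le_add_right p s) hq U)ᴴ *
      cornerTrunc (Nat.le_add_right p s) hq U).rank ≤ s := by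
  set V := U.submatrix id (Fin.castLE hq)
  have hV : Vᴴ * V = 1 := by
    rw [conjTranspose_submatrix, ← submatrix_mul _ _ _ _ _ Function.bijective_id, hU]
    exact submatrix_one _ (Fin.castLE_injective hq)
  set B := V.submatrix (Fin.natAdd p) id
  have hB : 1 - (cornerTrunc (Nat.le_add_right p s) hq U)ᴴ *
      cornerTrunc (Nat.le_add_right p s) hq U = Bᴴ * B := by
    rw [← hV, conjTranspose_mul_self_eq_add_fin_add V]
    exact add_sub_cancel_left _ _
  rw [hB]
  exact (rank_mul_le_right _ _).trans (rank_le_height B)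

theorem rank_one_sub_conjTranspose_mul_self_truncProd_le (n : ℕ) (ν c : ℕ → ℕ)
    (T : (j : ℕ) → Matrix (Fin (n + ν (j + 1))) (Fin (n + ν j)) ℂ) (k : ℕ)
    (hT : ∀ j < k, (1 - (T j)ᴴ * T j).rank ≤ c j) :
    (1 - (truncProd n ν T k)ᴴ * truncProd n ν T k).rank ≤ ∑ j ∈ Finset.range k, c j := by
  induction k with
  | zero => simp [truncProd]
  | succ k ih =>
    rw [Finset.sum_range_succ]
    exact (rank_one_sub_conjTranspose_mul_self_mul_le _ _).trans <|
      add_le_add (ih fun j hj => hT j (hj.trans k.lt_succ_self)) (hT k k.lt_succ_self)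

theorem stmt15_general
    (n r : ℕ)
    (ν μ : ℕ → ℕ)
    (hm : ∀ j, j < r → n + ν j ≤ n + ν (j + 1) + μ (j + 1))
    (U : (j : ℕ) →
      Matrix (Fin (n + ν (j + 1) + μ (j + 1))) (Fin (n + ν (j + 1) + μ (j + 1))) ℂ)
    (hU : ∀ j < r, (U j)ᴴ * U j = 1)
    (T : (j : ℕ) → Matrix (Fin (n + ν (j + 1))) (Fin (n + ν j)) ℂ)
    (hT : ∀ (j : ℕ) (hj : j < r),
      T j = cornerTrunc (Nat.le_add_right _ _) (hm j hj) (U j)) :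
    (1 - (truncProd n ν T r)ᴴ * truncProd n ν T r).rank ≤
      ∑ j ∈ Finset.range r, μ (j + 1) ∧
    (1 ≤ n - ∑ j ∈ Finset.range r, μ (j + 1) →
      n - ∑ j ∈ Finset.range r, μ (j + 1) ≤
        Module.finrank ℂ (LinearMap.ker
          (Matrix.mulVecLin (1 - (truncProd n ν T r)ᴴ * truncProd n ν T r)))) := by
  have hrank := rank_one_sub_conjTranspose_mul_self_truncProd_le n ν (fun j => μ (j + 1)) T r
    fun j hj => hT j hj ▸
      rank_one_sub_conjTranspose_mul_self_cornerTrunc_le (hm j hj) (U j) (hU j hj)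
  refine ⟨hrank, fun _ => ?_⟩
  have hnullity := LinearMap.finrank_range_add_finrank_ker
    (1 - (truncProd n ν T r)ᴴ * truncProd n ν T r).mulVecLin
  rw [Module.finrank_fin_fun] at hnullity
  change (1 - (truncProd n ν T r)ᴴ * truncProd n ν T r).rank + _ = _ at hnullity
  omega

/-- If `Y = T_r ⋯ T_1` is a product of truncations of unitary matrices (with
`ν_0 = 0`, `T_j` the upper-left `(n+ν_j) × (n+ν_{j-1})` corner of a unitary
matrix of size `m_j = n + ν_j + μ_j ≥ n + ν_{j-1}`), then
`rank(I_n − Y*Y) ≤ μ_1 + ⋯ + μ_r`; consequently, if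
`d = n − (μ_1 + ⋯ + μ_r) ≥ 1`, then the kernel of `I_n − Y*Y` has dimension at
least `d`, i.e. `Y` has the singular value `1` with multiplicity at least `d`. -/
theorem stmt15
    (n r : ℕ) (hn : 1 ≤ n) (hr : 1 ≤ r)
    (ν μ : ℕ → ℕ) (hν0 : ν 0 = 0)
    (hμ : ∀ j, 1 ≤ j → j ≤ r → 1 ≤ μ j)
    (hm : ∀ j, j < r → n + ν j ≤ n + ν (j + 1) + μ (j + 1))
    (U : (j : ℕ) →
      Matrix (Fin (n + ν (j + 1) + μ (j + 1))) (Fin (n + ν (j + 1) + μ (j + 1))) ℂ)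
    (hU : ∀ j < r, (U j)ᴴ * U j = 1)
    (T : (j : ℕ) → Matrix (Fin (n + ν (j + 1))) (Fin (n + ν j)) ℂ)
    (hT : ∀ (j : ℕ) (hj : j < r),
      T j = cornerTrunc (Nat.le_add_right _ _) (hm j hj) (U j)) :
    (1 - (truncProd n ν T r)ᴴ * truncProd n ν T r).rank ≤
      ∑ j ∈ Finset.range r, μ (j + 1) ∧
    (1 ≤ n - ∑ j ∈ Finset.range r, μ (j + 1) →
      n - ∑ j ∈ Finset.range r, μ (j + 1) ≤
        Module.finrank ℂ (LinearMap.ker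
          (Matrix.mulVecLin (1 - (truncProd n ν T r)ᴴ * truncProd n ν T r)))) :=
  stmt15_general n r ν μ hm U hU T hT
end

section
/- Let T be a p × q complex matrix and S an m × q complex matrix such that T*T + S*S = I_q (where * denotes the conjugate transpose), and let Y be a q × n complex matrix. Then rank(I_n − (TY)*(TY)) ≤ rank(I_n − Y*Y) + rank(S). -/
open Matrix

lemma matrix_rank_add_le {a b : ℕ} (A B : Matrix (Fin a) (Fin b) ℂ) :
    (A + B).rank ≤ A.rank + B.rank := by
  have hsub : LinearMap.range (A + B).mulVecLin ≤
      LinearMap.range A.mulVecLin ⊔ LinearMap.range B.mulVecLin := by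
    rintro x ⟨v, rfl⟩
    rw [mulVecLin_apply, add_mulVec]
    exact Submodule.add_mem_sup ⟨v, rfl⟩ ⟨v, rfl⟩
  exact (Submodule.finrank_mono hsub).trans
    (Submodule.finrank_add_le_finrank_add_finrank _ _)

/-- Rank inequality for truncations of unitary matrices: if `T*T + S*S = I_q`
and `Y` is any `q × n` complex matrix, then
`rank(I_n − (TY)*(TY)) ≤ rank(I_n − Y*Y) + rank(S)`. -/
theorem stmt16
    (p q m n : ℕ)
    (T : Matrix (Fin p) (Fin q) ℂ) (S : Matrix (Fin m) (Fin q) ℂ)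
    (Y : Matrix (Fin q) (Fin n) ℂ)
    (hTS : Tᴴ * T + Sᴴ * S = 1) :
    (1 - (T * Y)ᴴ * (T * Y)).rank ≤ (1 - Yᴴ * Y).rank + S.rank := by
  have hT : Tᴴ * T = 1 - Sᴴ * S := eq_sub_of_add_eq hTS
  have key : 1 - (T * Y)ᴴ * (T * Y) = (1 - Yᴴ * Y) + (S * Y)ᴴ * (S * Y) := by
    simp only [conjTranspose_mul]
    rw [Matrix.mul_assoc, ← Matrix.mul_assoc Tᴴ, hT, Matrix.sub_mul, Matrix.mul_sub,
      Matrix.one_mul]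
    rw [Matrix.mul_assoc Sᴴ S Y, ← Matrix.mul_assoc Yᴴ Sᴴ (S * Y)]
    abel
  rw [key]
  calc ((1 - Yᴴ * Y) + (S * Y)ᴴ * (S * Y)).rank
      ≤ (1 - Yᴴ * Y).rank + ((S * Y)ᴴ * (S * Y)).rank := matrix_rank_add_le _ _
    _ ≤ (1 - Yᴴ * Y).rank + S.rank := by
        rw [show ((S * Y)ᴴ * (S * Y)).rank = (S*Y).rank by open ComplexOrder in exact rank_conjTranspose_mul_self _]
        exact Nat.add_le_add_left (rank_mul_le_left _ _) _
end

section
/- Let k ≥ 0 be an integer and let φ : ℝ → ℝ be k times continuously differentiable. Then for every y ∈ ℝ, the k-th derivative of the function a ↦ (1/a)·φ(y/a), evaluated at a = 1, equals (−1)^k times the k-th derivative of the function u ↦ u^k·φ(u), evaluated at u = y; that is, (d/da)^k [a^{−1} φ(y/a)] |_{a=1} = (−1)^k (d/du)^k [u^k φ(u)] |_{u=y}. -/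
/-!
For every `a ≠ 0` one proves, by induction on `k`,
`(d/da)^k [a⁻¹ φ(y/a)] = (-1)^k a^{-(k+1)} (u^k φ)^{(k)}(y/a)`, and sets `a = 1`.
In the inductive step, differentiating `a^{-(j+1)} G(y/a)` with `G = (u^j φ)^{(j)}` gives
`-a^{-(j+2)} ((j+1) G + u G')` at `u = y/a`, and by Leibniz's rule
`(j+1) (u^j φ)^{(j)} + u (u^j φ)^{(j+1)} = (u · u^j φ)^{(j+1)}`.
-/

open Filter Topology

variable {𝕜 : Type*} [NontriviallyNormedField 𝕜]

theorem iteratedDeriv_succ_id_mul {g : 𝕜 → 𝕜} {n : ℕ} {x : 𝕜}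
    (hg : ContDiffAt 𝕜 (n + 1 : ℕ) g x) :
    iteratedDeriv (n + 1) (fun u => u * g u) x
      = x * iteratedDeriv (n + 1) g x + (n + 1) * iteratedDeriv n g x := by
  rw [iteratedDeriv_fun_mul contDiffAt_fun_id hg, Finset.sum_range_succ', Finset.sum_range_succ']
  simp only [iteratedDeriv_fun_id, Nat.add_eq_zero_iff, one_ne_zero, and_false, and_self,
    ↓reduceIte, Nat.add_eq_right, mul_zero, Nat.reduceSubDiff, zero_mul, Finset.sum_const_zero,
    zero_add, Nat.choose_one_right, Nat.cast_add, Nat.cast_one, mul_one, add_tsub_cancel_right,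
    Nat.choose_zero_right, one_mul, tsub_zero]
  ring

theorem HasDerivAt.inv_pow_mul_comp_div {G : 𝕜 → 𝕜} {G' y a : 𝕜} (n : ℕ)
    (hG : HasDerivAt G G' (y / a)) (ha : a ≠ 0) :
    HasDerivAt (fun x => x⁻¹ ^ (n + 1) * G (y / x))
      (-a⁻¹ ^ (n + 2) * ((n + 1) * G (y / a) + y / a * G')) a := by
  have hinv : HasDerivAt (fun x : 𝕜 => x⁻¹) (-a⁻¹ ^ 2) a := by
    simpa only [inv_pow] using hasDerivAt_inv ha
  have hdiv : HasDerivAt (fun x : 𝕜 => y / x) (y * -a⁻¹ ^ 2) a := by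
    simpa only [div_eq_mul_inv] using hinv.const_mul y
  refine ((hinv.pow (n + 1)).mul (hG.comp a hdiv)).congr_deriv ?_
  simp only [Function.comp_apply, Pi.pow_apply, Nat.add_sub_cancel]
  push_cast
  ring

theorem iteratedDeriv_inv_mul_comp_div {φ : 𝕜 → 𝕜} {k : ℕ} (hφ : ContDiff 𝕜 k φ) (y : 𝕜)
    {a : 𝕜} (ha : a ≠ 0) :
    iteratedDeriv k (fun x => x⁻¹ * φ (y / x)) a
      = (-1) ^ k * a⁻¹ ^ (k + 1) * iteratedDeriv k (fun u => u ^ k * φ u) (y / a) := by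
  induction k generalizing a with
  | zero => simp
  | succ j ih =>
    set g : 𝕜 → 𝕜 := fun u => u ^ j * φ u
    have hg : ContDiff 𝕜 (j + 1) g := by
      exact_mod_cast (contDiff_id.pow j).mul hφ
    have hG : HasDerivAt (iteratedDeriv j g) (iteratedDeriv (j + 1) g (y / a)) (y / a) := by
      rw [iteratedDeriv_succ]
      exact (hg.differentiable_iteratedDeriv j (by exact_mod_cast j.lt_succ_self) _).hasDerivAt
    have hev : iteratedDeriv j (fun x => x⁻¹ * φ (y / x))
        =ᶠ[𝓝 a] fun x => (-1) ^ j * (x⁻¹ ^ (j + 1) * iteratedDeriv j g (y / x)) := by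
      filter_upwards [isOpen_ne.mem_nhds ha] with x hx
      rw [ih (hφ.of_le (by exact_mod_cast j.le_succ)) hx, mul_assoc]
    have hleibniz : iteratedDeriv (j + 1) (fun u => u ^ (j + 1) * φ u) (y / a)
        = y / a * iteratedDeriv (j + 1) g (y / a) + (j + 1) * iteratedDeriv j g (y / a) := by
      simp_rw [pow_succ', mul_assoc]
      exact iteratedDeriv_succ_id_mul hg.contDiffAt
    rw [iteratedDeriv_succ, hev.deriv_eq, ((hG.inv_pow_mul_comp_div j ha).const_mul _).deriv,
      hleibniz]
    ring

/-- For a `C^k` function `φ` on `ℝ`,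
`(d/da)^k [a⁻¹ φ(y/a)] |_{a=1} = (−1)^k (d/du)^k [u^k φ(u)] |_{u=y}`. -/
theorem stmt17
    (k : ℕ) (φ : ℝ → ℝ) (hφ : ContDiff ℝ (k : ℕ∞) φ) (y : ℝ) :
    iteratedDeriv k (fun a : ℝ => a⁻¹ * φ (y / a)) 1 =
      (-1 : ℝ) ^ k * iteratedDeriv k (fun u : ℝ => u ^ k * φ u) y := by
  simpa using iteratedDeriv_inv_mul_comp_div hφ y one_ne_zero
end
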